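/- arXiv:1602.05748 — 8 statements merged into one kernel-verified Lean document; each statement's English description precedes it below -/
import Mathlib

section
/- Let C_k = x_1 x_2 … x_k x_1 (k ≥ 2) be a non-Hamiltonian directed cycle in a digraph D, and let Q = y_1 y_2 … y_r (r ≥ 1) be a directed path in the subdigraph of D induced by V(D) ∖ V(C_k). If d^-(y_1, V(C_k)) + d^+(y_r, V(C_k)) ≥ k + 1, then for every m with r+1 ≤ m ≤ k+r the digraph D contains a directed cycle C_m of length m with vertex set V(C_m) ⊆ V(C_k) ∪ V(Q). -/
/-!
Basic definitions for finite digraphs (no loops, no multiple arcs), where the arc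
relation is `A : V → V → Prop`.  Paths and cycles are given as lists of (distinct)
vertices.
-/

variable {V : Type*}

/-- A (directed) path, given by the list of its vertices. -/
def IsPathOn (A : V → V → Prop) (l : List V) : Prop :=
  l ≠ [] ∧ l.Nodup ∧ l.Chain' A

/-- A (directed) cycle, given by the list of its vertices; its length (number of
arcs) equals the length of the list. -/
def IsCycleOn (A : V → V → Prop) (l : List V) : Prop :=
  2 ≤ l.length ∧ l.Nodup ∧ l.Chain' A ∧
    ∀ a ∈ l.getLast?, ∀ b ∈ l.head?, A a b

/-- A directed path from `a` to `b`. -/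
def IsPathFromTo (A : V → V → Prop) (l : List V) (a b : V) : Prop :=
  IsPathOn A l ∧ l.head? = some a ∧ l.getLast? = some b

/-- Out-degree `d⁺(x)`. -/
noncomputable def outDeg (A : V → V → Prop) (x : V) : ℕ := {y | A x y}.ncard

/-- In-degree `d⁻(x)`. -/
noncomputable def inDeg (A : V → V → Prop) (x : V) : ℕ := {y | A y x}.ncard

/-- Degree `d(x) = d⁺(x) + d⁻(x)`. -/
noncomputable def deg (A : V → V → Prop) (x : V) : ℕ := outDeg A x + inDeg A x

/-- Out-degree into a set, `d⁺(x, S)`. -/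
noncomputable def outDegOn (A : V → V → Prop) (x : V) (S : Set V) : ℕ :=
  {y ∈ S | A x y}.ncard

/-- In-degree from a set, `d⁻(x, S)`. -/
noncomputable def inDegOn (A : V → V → Prop) (x : V) (S : Set V) : ℕ :=
  {y ∈ S | A y x}.ncard

/-- Degree with respect to a set, `d(x, S) = d⁺(x, S) + d⁻(x, S)`. -/
noncomputable def degOn (A : V → V → Prop) (x : V) (S : Set V) : ℕ :=
  outDegOn A x S + inDegOn A x S

/-- Two distinct vertices are adjacent if there is an arc between them in some
direction. -/
def DAdj (A : V → V → Prop) (x y : V) : Prop := A x y ∨ A y x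

/-- `D` is `S`-strongly connected: between any two distinct vertices of `S` there
are directed paths in both directions. -/
def SetStronglyConnected (A : V → V → Prop) (S : Set V) : Prop :=
  ∀ x ∈ S, ∀ y ∈ S, x ≠ y → ∃ l, IsPathFromTo A l x y

/-- Strong connectivity. -/
def StronglyConnected (A : V → V → Prop) : Prop :=
  ∀ x y : V, x ≠ y → ∃ l, IsPathFromTo A l x y

/-- 2-strong connectivity: at least 3 vertices, and deleting any vertex leaves a
strongly connected digraph. -/
def TwoStronglyConnected [Fintype V] (A : V → V → Prop) : Prop :=
  3 ≤ Fintype.card V ∧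
    ∀ w x y : V, x ≠ w → y ≠ w → x ≠ y → ∃ l, IsPathFromTo A l x y ∧ w ∉ l

/-- Condition `A₀` for a set `Y` of vertices. -/
def CondA0 [Fintype V] (A : V → V → Prop) (Y : Set V) : Prop :=
  ∀ x ∈ Y, ∀ y ∈ Y, ∀ z ∈ Y,
    x ≠ y → x ≠ z → y ≠ z → ¬ DAdj A x y →
      (¬ A x z →
        deg A x + deg A y + outDeg A x + inDeg A z ≥ 3 * Fintype.card V - 2) ∧
      (¬ A z x →
        deg A x + deg A y + inDeg A x + outDeg A z ≥ 3 * Fintype.card V - 2)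

/-- A `C`-bypass: a path of length at least two whose end-vertices lie on the
cycle `c` and whose internal vertices avoid `c`. -/
def IsBypass (A : V → V → Prop) (c p : List V) : Prop :=
  IsPathOn A p ∧ 3 ≤ p.length ∧
    (∀ a ∈ p.head?, a ∈ c) ∧ (∀ b ∈ p.getLast?, b ∈ c) ∧
    ∀ v ∈ p.tail.dropLast, v ∉ c

/-- The vertex `y` can be inserted into the path `p`. -/
def CanInsert (A : V → V → Prop) (p : List V) (y : V) : Prop :=
  ∃ i, ∃ h : i + 1 < p.length, A (p[i]'(Nat.lt_of_succ_lt h)) y ∧ A y (p[i+1]'h)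

/-- A `(C, x)`-path: a path from a vertex `u` of the cycle `c` to `x`, meeting `c`
only in `u`. -/
def IsCtoXPath (A : V → V → Prop) (c l : List V) (u x : V) : Prop :=
  IsPathFromTo A l u x ∧ u ∈ c ∧ ∀ v ∈ l, v ∈ c → v = u

/-- An `(x, C)`-path: a path from `x` to a vertex `v` of the cycle `c`, meeting `c`
only in `v`. -/
def IsXtoCPath (A : V → V → Prop) (c l : List V) (x v : V) : Prop :=
  IsPathFromTo A l x v ∧ v ∈ c ∧ ∀ w ∈ l, w ∈ c → w = v

/-!
Let `k = |C|`, `r = |Q|` and `s = m - r - 1 < k`. The positions `i` of `C` with `y_r → x_i`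
and those with `x_{i+s} → y_1` number `d⁺(y_r, C)` and `d⁻(y_1, C)`, together more than `k`,
so some `i` is of both kinds. Then `Q` followed by the segment `x_i x_{i+1} … x_{i+s}` of `C`
(the first `s + 1` vertices of `C` rotated by `i`) closes into a cycle of length `r + s + 1 = m`.
-/

theorem List.exists_getElem_of_length_lt_countP_add_countP {α β : Type*} (p : α → Bool)
    (q : β → Bool) :
    ∀ {l : List α} {l' : List β}, l.length = l'.length →
      l.length < l.countP p + l'.countP q →
      ∃ (i : ℕ) (hi : i < l.length) (hi' : i < l'.length), p l[i] ∧ q l'[i]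
  | [], [], _, hlt => by simp at hlt
  | [], _ :: _, hlen, _ | _ :: _, [], hlen, _ => by simp at hlen
  | a :: l, b :: l', hlen, hlt => by
    by_cases hab : p a ∧ q b
    · exact ⟨0, by simp, by simp, hab⟩
    · obtain ⟨i, hi, hi', hpq⟩ := exists_getElem_of_length_lt_countP_add_countP p q
        (l := l) (l' := l') (by simpa using hlen) (by
          simp only [List.length_cons, List.countP_cons] at hlt
          grind)
      exact ⟨i + 1, by simpa, by simpa, hpq⟩

theorem List.Nodup.ncard_setOf_mem_and {α : Type*} {l : List α} (hl : l.Nodup) (P : α → Prop)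
    [DecidablePred P] : {a | a ∈ l ∧ P a}.ncard = l.countP (P ·) := by
  classical
  have : {a | a ∈ l ∧ P a} = ↑(l.filter (P ·)).toFinset := by ext; simp
  rw [this, Set.ncard_coe_finset, List.toFinset_card_of_nodup (hl.filter _),
    List.countP_eq_length_filter]

variable {A : V → V → Prop} {c : List V}

theorem IsCycleOn.rotate_one (hc : IsCycleOn A c) : IsCycleOn A (c.rotate 1) := by
  obtain ⟨hlen, hnd, hch, hwrap⟩ := hc
  obtain ⟨a, b, l, rfl⟩ : ∃ a b l, c = a :: b :: l := by
    match c, hlen with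
    | a :: b :: l, _ => exact ⟨a, b, l, rfl⟩
  rw [List.rotate_cons_succ, List.rotate_zero]
  refine ⟨by simp, (List.perm_append_singleton a _).nodup_iff.2 hnd, ?_, ?_⟩
  · rw [List.Chain', List.isChain_append]
    refine ⟨hch.tail, List.isChain_singleton a, fun x hx y hy => ?_⟩
    simp only [List.head?_cons, Option.mem_some_iff] at hy
    subst hy
    exact hwrap x (by rwa [List.getLast?_cons_cons]) a rfl
  · intro x hx y hy
    simp only [List.getLast?_append, List.getLast?_singleton, Option.some_or,
      Option.mem_some_iff] at hx
    simp only [List.cons_append, List.head?_cons, Option.mem_some_iff] at hy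
    subst hx hy
    exact (List.isChain_cons_cons.1 hch).1

theorem IsCycleOn.rotate (hc : IsCycleOn A c) (n : ℕ) : IsCycleOn A (c.rotate n) := by
  induction n with
  | zero => simpa
  | succ n ih => rw [← List.rotate_rotate]; exact ih.rotate_one

theorem IsCycleOn.isPathOn (hc : IsCycleOn A c) : IsPathOn A c :=
  ⟨List.ne_nil_of_length_pos (by have := hc.1; omega), hc.2.1, hc.2.2.1⟩

theorem IsPathOn.isPathFromTo_take {l : List V} (hl : IsPathOn A l) {s : ℕ} (hs : s < l.length) :
    IsPathFromTo A (l.take (s + 1)) l[0] l[s] := by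
  obtain ⟨-, hnd, hch⟩ := hl
  have hne : l ≠ [] := List.ne_nil_of_length_pos (by omega)
  refine ⟨⟨by simpa, hnd.sublist (List.take_sublist _ _), hch.take _⟩, ?_, ?_⟩
  · simp [List.head?_eq_getElem?]
  · simp [List.getLast?_take, hs]

theorem isCycleOn_append {p p' : List V} {a b a' b' : V} (hp : IsPathFromTo A p a b)
    (hp' : IsPathFromTo A p' a' b') (hdisj : ∀ v ∈ p, v ∉ p') (hba' : A b a') (hb'a : A b' a) :
    IsCycleOn A (p ++ p') := by
  obtain ⟨⟨hne, hnd, hch⟩, hhead, hlast⟩ := hp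
  obtain ⟨⟨hne', hnd', hch'⟩, hhead', hlast'⟩ := hp'
  refine ⟨?_, hnd.append hnd' hdisj, ?_, ?_⟩
  · have := List.length_pos_iff.2 hne
    have := List.length_pos_iff.2 hne'
    simp only [List.length_append]
    omega
  · rw [List.Chain', List.isChain_append]
    refine ⟨hch, hch', ?_⟩
    simp_all
  · simp_all [List.getLast?_append, List.head?_append]

theorem exists_arcs_at_distance {l : List V} (hl : l.Nodup) {x y : V}
    (hdeg : inDegOn A y {v | v ∈ l} + outDegOn A x {v | v ∈ l} ≥ l.length + 1) {s : ℕ}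
    (hs : s < l.length) :
    ∃ i, A x ((l.rotate i)[0]'(by simp; omega)) ∧ A ((l.rotate i)[s]'(by simpa)) y := by
  classical
  have hcount : l.length < l.countP (A x ·) + (l.rotate s).countP (A · y) := by
    rw [← hl.ncard_setOf_mem_and, ← (List.nodup_rotate.2 hl).ncard_setOf_mem_and]
    simp only [List.mem_rotate]
    simp only [inDegOn, outDegOn, Set.mem_ofPred_eq] at hdeg
    omega
  obtain ⟨i, hi, hi', hx, hy⟩ := List.exists_getElem_of_length_lt_countP_add_countP _ _
    (List.length_rotate l s).symm hcount
  refine ⟨i, ?_, ?_⟩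
  · simpa [List.getElem_rotate, Nat.mod_eq_of_lt hi] using hx
  · simpa [List.getElem_rotate, Nat.add_comm] using hy

theorem cycle_extension_lemma_general (A : V → V → Prop)
    (c : List V) (hc : IsCycleOn A c)
    (q : List V) (hq : IsPathOn A q) (hdisj : ∀ v ∈ q, v ∉ c)
    (y₁ yᵣ : V) (hy₁ : q.head? = some y₁) (hyᵣ : q.getLast? = some yᵣ)
    (hdeg : inDegOn A y₁ {v | v ∈ c} + outDegOn A yᵣ {v | v ∈ c} ≥ c.length + 1) :
    ∀ m, q.length + 1 ≤ m → m ≤ c.length + q.length →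
      ∃ l : List V, IsCycleOn A l ∧ l.length = m ∧ ∀ v ∈ l, v ∈ c ∨ v ∈ q := by
  intro m hm₁ hm₂
  have hr : 0 < q.length := List.length_pos_iff.2 hq.1
  set s := m - q.length - 1
  have hs : s < c.length := by omega
  obtain ⟨i, hout, hin⟩ := exists_arcs_at_distance hc.2.1 hdeg hs
  have hseg := (hc.rotate i).isPathOn.isPathFromTo_take (s := s) (by simpa)
  have hseg_sub : ∀ v ∈ (c.rotate i).take (s + 1), v ∈ c :=
    fun v hv => List.mem_rotate.1 (List.mem_of_mem_take hv)
  refine ⟨q ++ (c.rotate i).take (s + 1), ?_, ?_, ?_⟩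
  · exact isCycleOn_append ⟨hq, hy₁, hyᵣ⟩ hseg (fun v hv hv' => hdisj v hv (hseg_sub v hv'))
      hout hin
  · simp only [List.length_append, List.length_take, List.length_rotate]
    omega
  · exact fun v hv => (List.mem_append.1 hv).symm.imp_left (hseg_sub v)

/-- Lemma 3.1. -/
theorem cycle_extension_lemma (A : V → V → Prop) (hloops : ∀ v, ¬ A v v)
    (c : List V) (hc : IsCycleOn A c) (hnonham : ∃ v : V, v ∉ c)
    (q : List V) (hq : IsPathOn A q) (hdisj : ∀ v ∈ q, v ∉ c)
    (y₁ yᵣ : V) (hy₁ : q.head? = some y₁) (hyᵣ : q.getLast? = some yᵣ)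
    (hdeg : inDegOn A y₁ {v | v ∈ c} + outDegOn A yᵣ {v | v ∈ c} ≥ c.length + 1) :
    ∀ m, q.length + 1 ≤ m → m ≤ c.length + q.length →
      ∃ l : List V, IsCycleOn A l ∧ l.length = m ∧ ∀ v ∈ l, v ∈ c ∨ v ∈ q :=
  cycle_extension_lemma_general A c hc q hq hdisj y₁ yᵣ hy₁ hyᵣ hdeg
end

section
/- Let P = x_1 x_2 … x_k (k ≥ 2) be a non-Hamiltonian directed path in a digraph D, and let Q = y_1 y_2 … y_r (r ≥ 1) be a directed path in the subdigraph of D induced by V(D) ∖ V(P). If d^-(y_1, V(P)) + d^+(y_r, V(P)) ≥ k + d^-(y_1, {x_k}) + d^+(y_r, {x_1}), then there exists i ∈ [1, k−1] such that x_i y_1 and y_r x_{i+1} are arcs of D; consequently D contains a directed path from x_1 to x_k with vertex set V(P) ∪ V(Q). -/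
/-!
Basic definitions for finite digraphs (no loops, no multiple arcs), where the arc
relation is `A : V → V → Prop`.  Paths and cycles are given as lists of (distinct)
vertices.
-/

variable {V : Type*}

/-! The in-neighbours of `y₁` among `x₁ … x_{k-1}` and the out-neighbours of `y_r` among
`x₂ … x_k` index two sets of gaps `(x_i, x_{i+1})`, `1 ≤ i ≤ k - 1`, and the degree condition
says exactly that their sizes add up to at least `k`. So some gap carries both an arc `x_i y₁`
and an arc `y_r x_{i+1}`, and inserting `Q` into that gap gives the required path. -/

theorem List.exists_getElem_succ_of_length_le_countP_add_countP {α : Type*} (P Q : α → Bool)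
    {l : List α} (hl : l ≠ []) (h : l.length ≤ l.dropLast.countP P + l.tail.countP Q) :
    ∃ i, ∃ hi : i + 1 < l.length, P l[i] ∧ Q l[i + 1] := by
  induction l with
  | nil => contradiction
  | cons a m ih =>
    cases m with
    | nil => simp at h
    | cons b m =>
      by_cases hab : P a ∧ Q b
      · exact ⟨0, by simp, hab⟩
      have hab_le : (if P a then 1 else 0) + (if Q b then 1 else 0) ≤ 1 := by
        split_ifs <;> simp_all
      simp only [List.dropLast_cons_cons, List.tail_cons, List.countP_cons, List.length_cons]
        at h
      obtain ⟨i, hi, hPQ⟩ := ih (List.cons_ne_nil b m) (by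
        simp only [List.tail_cons, List.length_cons]
        omega)
      exact ⟨i + 1, by simpa using hi, hPQ⟩

theorem List.Nodup.ncard_sep_eq_countP {α : Type*} {l : List α} (hl : l.Nodup) (P : α → Prop)
    [DecidablePred P] : {v ∈ {v | v ∈ l} | P v}.ncard = l.countP (P ·) := by
  classical
  have : {v ∈ {v | v ∈ l} | P v} = ↑(l.filter (P ·)).toFinset := by ext; simp
  rw [this, Set.ncard_coe_finset, List.toFinset_card_of_nodup (hl.filter _),
    List.countP_eq_length_filter]

section Insertion

variable {α : Type*} {p q : List α} {i : ℕ}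

theorem List.take_append_append_drop_perm (p q : List α) (i : ℕ) :
    (p.take i ++ q ++ p.drop i).Perm (q ++ p) := by
  have := (List.perm_append_comm (l₁ := p.take i) (l₂ := q)).append_right (p.drop i)
  rwa [List.append_assoc q, List.take_append_drop] at this

theorem List.head?_take_succ_append_append_drop (hi : i + 1 < p.length) :
    (p.take (i + 1) ++ q ++ p.drop (i + 1)).head? = p.head? := by
  cases p with
  | nil => simp at hi
  | cons a t => simp

theorem List.getLast?_take_append_append_drop (hi : i < p.length) :
    (p.take i ++ q ++ p.drop i).getLast? = p.getLast? := by
  rw [List.getLast?_append, List.getLast?_drop, if_neg (by omega)]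
  cases h : p.getLast? with
  | none => simp_all
  | some x => rfl

variable {A : α → α → Prop} {y₁ yᵣ : α}

theorem IsPathOn.take_append_append_drop (hp : IsPathOn A p) (hq : IsPathOn A q)
    (hdisj : ∀ v ∈ q, v ∉ p) (hy₁ : q.head? = some y₁) (hyᵣ : q.getLast? = some yᵣ)
    (hi : i + 1 < p.length) (hin : A p[i] y₁) (hout : A yᵣ p[i + 1]) :
    IsPathOn A (p.take (i + 1) ++ q ++ p.drop (i + 1)) := by
  obtain ⟨-, hpnd, hpch⟩ := hp
  obtain ⟨hqne, hqnd, hqch⟩ := hq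
  refine ⟨by simp [hqne], ?_, ?_⟩
  · refine (List.take_append_append_drop_perm p q (i + 1)).nodup_iff.mpr ?_
    exact List.nodup_append.mpr ⟨hqnd, hpnd, fun a ha b hb hab => hdisj a ha (hab ▸ hb)⟩
  · have htake : (p.take (i + 1)).getLast? = some p[i] := by
      simp [List.getLast?_take, List.getElem?_eq_getElem (Nat.lt_of_succ_lt hi)]
    have hdrop : (p.drop (i + 1)).head? = some p[i + 1] := by
      simp [List.head?_drop, List.getElem?_eq_getElem hi]
    refine List.isChain_append.mpr ⟨List.isChain_append.mpr ⟨hpch.take _, hqch, ?_⟩,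
      hpch.drop _, ?_⟩
    · simp_all
    · simp_all [List.getLast?_append]

end Insertion

section Degrees

variable {A : V → V → Prop} [DecidableRel A] {l : List V} {x y : V}

theorem inDegOn_singleton : inDegOn A y {x} = [x].countP (fun v => A v y) := by
  rw [inDegOn, ← (List.nodup_singleton x).ncard_sep_eq_countP]
  simp

theorem outDegOn_singleton : outDegOn A y {x} = [x].countP (fun v => A y v) := by
  rw [outDegOn, ← (List.nodup_singleton x).ncard_sep_eq_countP]
  simp

theorem inDegOn_list_eq_countP_dropLast_add (hl : l.Nodup) (hx : l.getLast? = some x) :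
    inDegOn A y {v | v ∈ l} = l.dropLast.countP (fun v => A v y) + inDegOn A y {x} := by
  rw [inDegOn, hl.ncard_sep_eq_countP, inDegOn_singleton,
    ← List.countP_append, List.dropLast_append_getLast? x hx]

theorem outDegOn_list_eq_add_countP_tail (hl : l.Nodup) (hx : l.head? = some x) :
    outDegOn A y {v | v ∈ l} = outDegOn A y {x} + l.tail.countP (fun v => A y v) := by
  obtain ⟨t, rfl⟩ := List.head?_eq_some_iff.mp hx
  rw [outDegOn, hl.ncard_sep_eq_countP, outDegOn_singleton, ← List.countP_append]
  rfl

end Degrees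

theorem path_insertion_lemma_general (A : V → V → Prop)
    (p : List V) (hp : IsPathOn A p)
    (q : List V) (hq : IsPathOn A q) (hdisj : ∀ v ∈ q, v ∉ p)
    (x₁ xₖ y₁ yᵣ : V)
    (hx₁ : p.head? = some x₁) (hxₖ : p.getLast? = some xₖ)
    (hy₁ : q.head? = some y₁) (hyᵣ : q.getLast? = some yᵣ)
    (hdeg : inDegOn A y₁ {v | v ∈ p} + outDegOn A yᵣ {v | v ∈ p} ≥
      p.length + inDegOn A y₁ {xₖ} + outDegOn A yᵣ {x₁}) :
    (∃ i, ∃ h : i + 1 < p.length,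
      A (p[i]'(Nat.lt_of_succ_lt h)) y₁ ∧ A yᵣ (p[i+1]'h)) ∧
    ∃ l : List V, IsPathFromTo A l x₁ xₖ ∧ ∀ v, v ∈ l ↔ (v ∈ p ∨ v ∈ q) := by
  classical
  rw [inDegOn_list_eq_countP_dropLast_add hp.2.1 hxₖ,
    outDegOn_list_eq_add_countP_tail hp.2.1 hx₁] at hdeg
  obtain ⟨i, hi, hin, hout⟩ :=
    List.exists_getElem_succ_of_length_le_countP_add_countP (fun v => A v y₁) (fun v => A yᵣ v)
      hp.1 (by omega)
  simp only [decide_eq_true_eq] at hin hout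
  refine ⟨⟨i, hi, hin, hout⟩, _,
    ⟨hp.take_append_append_drop hq hdisj hy₁ hyᵣ hi hin hout, ?_, ?_⟩, fun v => ?_⟩
  · rw [List.head?_take_succ_append_append_drop hi, hx₁]
  · rw [List.getLast?_take_append_append_drop hi, hxₖ]
  · rw [(List.take_append_append_drop_perm p q (i + 1)).mem_iff, List.mem_append, or_comm]

/-- Lemma 3.2. -/
theorem path_insertion_lemma (A : V → V → Prop) (hloops : ∀ v, ¬ A v v)
    (p : List V) (hp : IsPathOn A p) (hk : 2 ≤ p.length)
    (hnonham : ∃ v : V, v ∉ p)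
    (q : List V) (hq : IsPathOn A q) (hdisj : ∀ v ∈ q, v ∉ p)
    (x₁ xₖ y₁ yᵣ : V)
    (hx₁ : p.head? = some x₁) (hxₖ : p.getLast? = some xₖ)
    (hy₁ : q.head? = some y₁) (hyᵣ : q.getLast? = some yᵣ)
    (hdeg : inDegOn A y₁ {v | v ∈ p} + outDegOn A yᵣ {v | v ∈ p} ≥
      p.length + inDegOn A y₁ {xₖ} + outDegOn A yᵣ {x₁}) :
    (∃ i, ∃ h : i + 1 < p.length,
      A (p[i]'(Nat.lt_of_succ_lt h)) y₁ ∧ A yᵣ (p[i+1]'h)) ∧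
    ∃ l : List V, IsPathFromTo A l x₁ xₖ ∧ ∀ v, v ∈ l ↔ (v ∈ p ∨ v ∈ q) :=
  path_insertion_lemma_general A p hp q hq hdisj x₁ xₖ y₁ yᵣ hx₁ hxₖ hy₁ hyᵣ hdeg
end

section
/- Let D be a digraph, let P be a directed path from a to b in D, let Q be a directed path in the subdigraph of D induced by V(D) ∖ V(P), and let S be a subset of V(Q). If every vertex of S can be inserted into P, then there exists a directed path R from a to b such that V(P) ∪ S ⊆ V(R) ⊆ V(P) ∪ V(Q). -/
/-!
Basic definitions for finite digraphs (no loops, no multiple arcs), where the arc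
relation is `A : V → V → Prop`.  Paths and cycles are given as lists of (distinct)
vertices.
-/

variable {V : Type*}

/-!
Induction on the length of `Q`, discarding its leading vertices outside `S`. If the first vertex
`v` of `Q` lies in `S`, it can be inserted between consecutive vertices `x, y` of `P`; let `w` be
the last vertex of `Q` that can be inserted between `x` and `y`. Replacing the arc `xy` of `P` by
`x v … w y` gives an `(a, b)`-path containing `P`. Of the arcs of `P` only `xy` is lost, and by
the choice of `w` no vertex of `Q` after `w` needs it, so every vertex of `S` after `w` can still
be inserted into the new path, and the induction applies to the part of `Q` after `w`.
-/

namespace List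

variable {α : Type*}

theorem exists_eq_append_cons_last_of_exists {P : α → Prop} :
    ∀ {l : List α}, (∃ u ∈ l, P u) →
      ∃ l₁ u l₂, l = l₁ ++ u :: l₂ ∧ P u ∧ ∀ w ∈ l₂, ¬ P w
  | [], h => by simp at h
  | c :: l, h => by
    by_cases hl : ∃ u ∈ l, P u
    · obtain ⟨l₁, u, l₂, rfl, hu, hl₂⟩ := exists_eq_append_cons_last_of_exists hl
      exact ⟨c :: l₁, u, l₂, rfl, hu, hl₂⟩
    · push Not at hl
      obtain ⟨u, hu, hPu⟩ := h
      rcases mem_cons.1 hu with rfl | hu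
      · exact ⟨[], u, l, rfl, hPu, hl⟩
      · exact absurd hPu (hl u hu)

theorem pair_infix_insert_of_ne {l₁ l₂ seg : List α} {x y x' y' : α}
    (h : [x', y'] <:+: l₁ ++ x :: y :: l₂) (hne : (x', y') ≠ (x, y)) :
    [x', y'] <:+: l₁ ++ x :: seg ++ y :: l₂ := by
  rw [show l₁ ++ x :: y :: l₂ = (l₁ ++ [x]) ++ (y :: l₂) by simp,
    infix_append_iff_ne_nil] at h
  rcases h with h | h | ⟨m₁, m₂, hm₁, hm₂, hm, hsuf, hpre⟩
  · exact h.trans ⟨[], seg ++ y :: l₂, by simp⟩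
  · exact h.trans ⟨l₁ ++ x :: seg, [], by simp⟩
  · refine absurd ?_ hne
    rcases m₁ with _ | ⟨a, _ | ⟨c, t⟩⟩
    · exact absurd rfl hm₁
    · obtain ⟨rfl, rfl⟩ : x' = a ∧ [y'] = m₂ := by simpa using hm
      simp only [singleton_suffix_append_singleton_iff, cons_prefix_cons, nil_prefix,
        and_true] at hsuf hpre
      rw [hsuf, hpre]
    · obtain ⟨-, -, -, rfl⟩ : x' = a ∧ y' = c ∧ t = [] ∧ m₂ = [] := by simpa using hm
      exact absurd rfl hm₂

end List

section MultiInsertion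

variable {A : V → V → Prop}

theorem canInsert_iff {p : List V} {s : V} :
    CanInsert A p s ↔ ∃ x y, [x, y] <:+: p ∧ A x s ∧ A s y := by
  constructor
  · rintro ⟨i, hi, hxs, hsy⟩
    refine ⟨_, _, ⟨p.take i, p.drop (i + 2), ?_⟩, hxs, hsy⟩
    conv_rhs => rw [← List.take_append_drop i p,
      List.drop_eq_getElem_cons (show i < p.length by omega),
      List.drop_eq_getElem_cons hi]
    simp
  · rintro ⟨x, y, ⟨l₁, l₂, rfl⟩, hxs, hsy⟩
    refine ⟨l₁.length, by simp, ?_, ?_⟩ <;> simpa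

theorem IsPathFromTo.insert {l₁ l₂ seg : List V} {x y a b : V}
    (hp : IsPathFromTo A (l₁ ++ x :: y :: l₂) a b) (hseg : (x :: seg ++ [y]).IsChain A)
    (hnd : seg.Nodup) (hdisj : ∀ v ∈ seg, v ∉ l₁ ++ x :: y :: l₂) :
    IsPathFromTo A (l₁ ++ x :: seg ++ y :: l₂) a b := by
  obtain ⟨⟨-, hpnd, hpch⟩, hhead, hlast⟩ := hp
  refine ⟨⟨by simp, ?_, ?_⟩, by simpa [List.head?_append] using hhead,
    by simpa [List.getLast?_cons] using hlast⟩
  · have hperm : (l₁ ++ x :: seg ++ y :: l₂).Perm ((l₁ ++ x :: y :: l₂) ++ seg) := by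
      simpa using ((List.perm_append_comm (l₁ := seg) (l₂ := y :: l₂)).cons x).append_left l₁
    exact hperm.nodup_iff.2 (List.nodup_append'.2 ⟨hpnd, hnd, fun v hvp hvs => hdisj v hvs hvp⟩)
  · rw [show l₁ ++ x :: y :: l₂ = (l₁ ++ [x]) ++ ([y] ++ l₂) by simp] at hpch
    have h₁ : ((l₁ ++ x :: seg) ++ [y]).IsChain A := by
      simpa using hpch.left_of_append.append_overlap hseg (by simp)
    have h₂ : (l₁ ++ x :: seg ++ y :: l₂).IsChain A := by
      simpa using h₁.append_overlap hpch.right_of_append (by simp)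
    exact h₂

theorem CanInsert.insert {l₁ l₂ seg : List V} {x y s : V}
    (h : CanInsert A (l₁ ++ x :: y :: l₂) s) (hs : ¬ (A x s ∧ A s y)) :
    CanInsert A (l₁ ++ x :: seg ++ y :: l₂) s := by
  obtain ⟨x', y', hinf, hx's, hsy'⟩ := canInsert_iff.1 h
  refine canInsert_iff.2 ⟨x', y', List.pair_infix_insert_of_ne hinf ?_, hx's, hsy'⟩
  rintro ⟨⟩
  exact hs ⟨hx's, hsy'⟩

theorem IsPathFromTo.exists_insert_segment {p q' : List V} {v a b : V} {S : Set V}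
    (hp : IsPathFromTo A p a b) (hqnd : (v :: q').Nodup) (hqch : (v :: q').IsChain A)
    (hdisj : ∀ u ∈ v :: q', u ∉ p) (hv : v ∈ S) (hins : ∀ s ∈ S, CanInsert A p s) :
    ∃ seg q₂ r, v :: q' = seg ++ q₂ ∧ seg ≠ [] ∧ IsPathFromTo A r a b ∧
      (∀ u, u ∈ r ↔ u ∈ p ∨ u ∈ seg) ∧ ∀ s ∈ S, s ∈ q₂ → CanInsert A r s := by
  obtain ⟨x, y, ⟨l₁, l₂, hp_eq⟩, hxv, hvy⟩ := canInsert_iff.1 (hins v hv)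
  simp only [List.append_assoc, List.cons_append, List.nil_append] at hp_eq
  subst hp_eq
  obtain ⟨q₁, w, q₂, hq, ⟨-, hwy⟩, hq₂⟩ :=
    List.exists_eq_append_cons_last_of_exists (P := fun u => A x u ∧ A u y)
      ⟨v, List.mem_cons_self (l := q'), hxv, hvy⟩
  have hseg : (x :: (q₁ ++ [w]) ++ [y]).IsChain A := by
    have hxq : (x :: q₁ ++ [w] ++ q₂).IsChain A := by
      simpa [← hq] using List.isChain_cons_cons.2 ⟨hxv, hqch⟩
    simpa using hxq.left_of_append.append_overlap (List.isChain_pair.2 hwy) (by simp)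
  rw [List.append_cons] at hq
  have hsegq : ∀ u ∈ q₁ ++ [w], u ∈ v :: q' := fun u hu => hq ▸ List.mem_append_left _ hu
  refine ⟨q₁ ++ [w], q₂, l₁ ++ x :: (q₁ ++ [w]) ++ y :: l₂, hq, by simp,
    hp.insert hseg ?_ (fun u hu => hdisj u (hsegq u hu)), fun u => ?_,
    fun s hs hs₂ => (hins s hs).insert (hq₂ s hs₂)⟩
  · exact (hq ▸ hqnd).sublist (List.sublist_append_left _ _)
  · simp only [List.mem_append, List.mem_cons]
    tauto

theorem exists_path_insert_all {a b : V} (q : List V) (hqnd : q.Nodup) (hqch : q.IsChain A)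
    (p : List V) (hp : IsPathFromTo A p a b) (hdisj : ∀ v ∈ q, v ∉ p)
    (S : Set V) (hSq : ∀ s ∈ S, s ∈ q) (hins : ∀ s ∈ S, CanInsert A p s) :
    ∃ r : List V, IsPathFromTo A r a b ∧
      (∀ v ∈ p, v ∈ r) ∧ (∀ s ∈ S, s ∈ r) ∧ (∀ v ∈ r, v ∈ p ∨ v ∈ q) := by
  match q, hqnd, hqch, hdisj, hSq with
  | [], _, _, _, hSq =>
    exact ⟨p, hp, fun v hv => hv, fun s hs => absurd (hSq s hs) (by simp), fun v hv => .inl hv⟩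
  | v :: q', hqnd, hqch, hdisj, hSq =>
    by_cases hv : v ∈ S
    case neg =>
      obtain ⟨r, hr, hpr, hSr, hrpq⟩ := exists_path_insert_all q' (List.nodup_cons.1 hqnd).2
        hqch.tail p hp (fun u hu => hdisj u (by simp [hu])) S
        (fun s hs => (List.mem_cons.1 (hSq s hs)).resolve_left (by rintro rfl; exact hv hs)) hins
      exact ⟨r, hr, hpr, hSr, fun u hu => (hrpq u hu).imp_right (by simp +contextual)⟩
    obtain ⟨seg, q₂, r₀, hq, hseg, hr₀, hmem, hins₀⟩ :=
      hp.exists_insert_segment hqnd hqch hdisj hv hins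
    -- discharges the termination goal of the recursive call on `q₂`
    have hlen : q₂.length ≤ q'.length := by
      have := congrArg List.length hq
      have := List.length_pos_iff.2 hseg
      simp only [List.length_cons, List.length_append] at *
      omega
    rw [hq] at hqnd hqch hdisj hSq ⊢
    obtain ⟨-, hq₂nd, hsegq₂⟩ := List.nodup_append'.1 hqnd
    obtain ⟨r, hr, hr₀r, hSr, hrq⟩ := exists_path_insert_all q₂ hq₂nd hqch.right_of_append r₀ hr₀
      (fun u hu hur => ((hmem u).1 hur).elim (hdisj u (List.mem_append_right _ hu))
        (fun hus => hsegq₂ hus hu))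
      {s ∈ S | s ∈ q₂} (fun s hs => hs.2) (fun s hs => hins₀ s hs.1 hs.2)
    refine ⟨r, hr, fun u hu => hr₀r u ((hmem u).2 (.inl hu)), fun s hs => ?_, fun u hu => ?_⟩
    · rcases List.mem_append.1 (hSq s hs) with hs' | hs'
      exacts [hr₀r s ((hmem s).2 (.inr hs')), hSr s ⟨hs, hs'⟩]
    · rcases hrq u hu with hu' | hu'
      · exact ((hmem u).1 hu').imp_right (List.mem_append_left _)
      · exact .inr (List.mem_append_right _ hu')
termination_by q.length

end MultiInsertion

theorem multi_insertion_lemma_general (A : V → V → Prop)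
    (a b : V) (p : List V) (hp : IsPathFromTo A p a b)
    (q : List V) (hq : IsPathOn A q) (hdisj : ∀ v ∈ q, v ∉ p)
    (S : Set V) (hSq : ∀ s ∈ S, s ∈ q)
    (hins : ∀ s ∈ S, CanInsert A p s) :
    ∃ r : List V, IsPathFromTo A r a b ∧
      (∀ v ∈ p, v ∈ r) ∧ (∀ s ∈ S, s ∈ r) ∧ (∀ v ∈ r, v ∈ p ∨ v ∈ q) :=
  exists_path_insert_all q hq.2.1 hq.2.2 p hp hdisj S hSq hins

/-- Multi-insertion lemma, Lemma 3.3. -/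
theorem multi_insertion_lemma (A : V → V → Prop) (hloops : ∀ v, ¬ A v v)
    (a b : V) (p : List V) (hp : IsPathFromTo A p a b)
    (q : List V) (hq : IsPathOn A q) (hdisj : ∀ v ∈ q, v ∉ p)
    (S : Set V) (hSq : ∀ s ∈ S, s ∈ q)
    (hins : ∀ s ∈ S, CanInsert A p s) :
    ∃ r : List V, IsPathFromTo A r a b ∧
      (∀ v ∈ p, v ∈ r) ∧ (∀ s ∈ S, s ∈ r) ∧ (∀ v ∈ r, v ∈ p ∨ v ∈ q) :=
  multi_insertion_lemma_general A a b p hp q hq hdisj S hSq hins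
end

section
/- Let D be a digraph of order n, let C be a non-Hamiltonian directed cycle in D, and let x be a vertex not on C. Assume that D contains a directed path from C to x and a directed path from x to C, and that D contains no C-bypass through x. Then: (i) if x is adjacent to some vertex y of C, then D is not 2-strongly connected, d(x, V(C) ∖ {y}) = 0, and d(x) + d(z) ≤ 2n − 2 for all vertices z ∈ V(C) ∖ {y}; (ii) if x is adjacent to no vertex of C, let P be a shortest path from C to x meeting C only in a vertex u, and let Q be a shortest path from x to C meeting C only in a vertex v; if u ≠ v then d(x) + d(z) ≤ 2n − 2 for all vertices z ∈ V(C), except possibly one vertex from {u, v}; if u = v then d(x) + d(z) ≤ 2n − 2 for all vertices z ∈ V(C) ∖ {u}. -/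
/-!
Basic definitions for finite digraphs (no loops, no multiple arcs), where the arc
relation is `A : V → V → Prop`.  Paths and cycles are given as lists of (distinct)
vertices.
-/

variable {V : Type*}

/-!
If a `(C, x)`-path starting at `u` and an `(x, C)`-path ending at `v ≠ u` had no internal vertex in
common, their concatenation would be a `C`-bypass through `x`. In particular an arc `x → y` into the
cycle forces every `(C, x)`-path to start at `y`, which gives part (i) apart from the degree bound.

For non-adjacent `x` and `z`, a vertex joined to `{x, z}` by three or more arcs is the middle vertex
of a 2-path `z → w → x` or `x → w → z` that also carries a reverse arc (`heavyMid`), so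
`d(x) + d(z) + 4 ≤ 2n + |heavyMid A z x| + |heavyMid A x z|`, and every degree bound amounts to
showing that these two sets have at most two elements in total. A 2-path `x → w → z` where `z` is not
the start of a shortest `(C, x)`-path `P` must meet `P` in `w`, and its reverse arc would shortcut `P`
unless `w` is the first or the last internal vertex of `P`; symmetrically for `(x, C)`-paths.

Reversing all arcs (`flip A`) exchanges `(C, x)`- and `(x, C)`-paths and preserves degrees, bypasses
and 2-strong connectivity, so each argument is carried out for one orientation only; an `(x, C)`-path
is handled as a `(C, x)`-path of the reversed digraph.
-/

open List

def NoBypassThrough (A : V → V → Prop) (c : List V) (x : V) : Prop :=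
  ¬ ∃ p, IsBypass A c p ∧ x ∈ p

section Reversal

variable {A : V → V → Prop} {c : List V} {x : V}

theorem isPathOn_iff {l : List V} : IsPathOn A l ↔ l ≠ [] ∧ l.Nodup ∧ l.IsChain A := Iff.rfl

theorem isPathFromTo_reverse {l : List V} {a b : V} :
    IsPathFromTo (flip A) l.reverse b a ↔ IsPathFromTo A l a b := by
  simp [IsPathFromTo, isPathOn_iff, List.isChain_reverse, flip, and_comm]

theorem exists_isPathFromTo_flip {a b : V} :
    (∃ l, IsPathFromTo (flip A) l b a) ↔ ∃ l, IsPathFromTo A l a b :=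
  ⟨fun ⟨l, h⟩ => ⟨l.reverse, (isPathFromTo_reverse (A := flip A)).2 h⟩,
    fun ⟨l, h⟩ => ⟨l.reverse, isPathFromTo_reverse.2 h⟩⟩

theorem isBypass_reverse {p : List V} : IsBypass (flip A) c p.reverse ↔ IsBypass A c p := by
  simp only [IsBypass, isPathOn_iff, List.isChain_reverse, flip, ne_eq, reverse_eq_nil_iff,
    nodup_reverse, length_reverse, head?_reverse, getLast?_reverse, tail_reverse,
    dropLast_reverse, tail_dropLast, mem_reverse]
  tauto

theorem NoBypassThrough.flip (hnb : NoBypassThrough A c x) : NoBypassThrough (flip A) c x := by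
  rintro ⟨p, hp, hxp⟩
  rw [← reverse_reverse p, isBypass_reverse] at hp
  exact hnb ⟨p.reverse, hp, mem_reverse.2 hxp⟩

theorem TwoStronglyConnected.flip [Fintype V] (h : TwoStronglyConnected A) :
    TwoStronglyConnected (flip A) := by
  refine ⟨h.1, fun w a b haw hbw hab => ?_⟩
  obtain ⟨l, hl, hwl⟩ := h.2 w b a hbw haw hab.symm
  exact ⟨l.reverse, isPathFromTo_reverse.2 hl, by simpa using hwl⟩

theorem deg_flip (x : V) : deg (flip A) x = deg A x := add_comm _ _

end Reversal

section Counting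

variable {A : V → V → Prop}

def heavyMid (A : V → V → Prop) (a b : V) : Set V :=
  {w | A a w ∧ A w b ∧ (A b w ∨ A w a)}

theorem heavyMid_flip (a b : V) : heavyMid (flip A) a b = heavyMid A b a := by
  ext w
  simp only [heavyMid, flip, Set.mem_ofPred_eq]
  tauto

open Classical in
theorem ncard_eq_sum_ite [Fintype V] (S : Set V) : S.ncard = ∑ w, if w ∈ S then 1 else 0 := by
  rw [Set.ncard_eq_toFinset_card', ← Set.filter_mem_univ_eq_toFinset, Finset.card_filter]

open Classical in
theorem arc_indicators_le (hloops : ∀ v, ¬ A v v) {x z : V} (hxz : x ≠ z) (hnadj : ¬ DAdj A x z)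
    (w : V) :
    (if A x w then 1 else 0) + (if A w x then 1 else 0) + (if A z w then 1 else 0) +
        (if A w z then 1 else 0) + 2 * (if w = x then 1 else 0) + 2 * (if w = z then 1 else 0) ≤
      2 + (if w ∈ heavyMid A z x then 1 else 0) + (if w ∈ heavyMid A x z then 1 else 0) := by
  simp only [DAdj, not_or] at hnadj
  by_cases hwx : w = x
  · subst hwx
    simp only [hloops, hnadj, hxz, if_true, if_false]
    split_ifs <;> omega
  by_cases hwz : w = z
  · subst hwz
    simp only [hloops, hnadj, Ne.symm hxz, if_true, if_false]
    split_ifs <;> omega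
  simp only [heavyMid, Set.mem_ofPred_eq, hwx, hwz]
  by_cases A x w <;> by_cases A w x <;> by_cases A z w <;> by_cases A w z <;> simp [*]

theorem deg_add_deg_add_four_le [Fintype V] (hloops : ∀ v, ¬ A v v) {x z : V} (hxz : x ≠ z)
    (hnadj : ¬ DAdj A x z) :
    deg A x + deg A z + 4 ≤
      2 * Fintype.card V + (heavyMid A z x).ncard + (heavyMid A x z).ncard := by
  classical
  have h := Finset.sum_le_sum fun w (_ : w ∈ Finset.univ) => arc_indicators_le hloops hxz hnadj w
  simp only [Finset.sum_add_distrib, ← Finset.mul_sum, Finset.sum_ite_eq',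
    Finset.mem_univ, if_true, Finset.sum_const, Finset.card_univ, smul_eq_mul] at h
  simp only [deg, outDeg, inDeg, ncard_eq_sum_ite, Set.mem_ofPred_eq]
  omega

theorem deg_add_deg_le_of_ncard_heavyMid_le [Fintype V] (hloops : ∀ v, ¬ A v v) {x z : V}
    (hxz : x ≠ z) (hnadj : ¬ DAdj A x z)
    (h : (heavyMid A z x).ncard + (heavyMid A x z).ncard ≤ 2) :
    deg A x + deg A z ≤ 2 * Fintype.card V - 2 := by
  have := deg_add_deg_add_four_le hloops hxz hnadj
  omega

theorem ncard_setOf_mem_head?_or_mem_getLast?_le (m : List V) :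
    {w | w ∈ m.head? ∨ w ∈ m.getLast?}.ncard ≤ min 2 m.length := by
  rcases m with _ | ⟨a, _ | ⟨b, t⟩⟩
  · simp
  · simp
  · have hsub : {w | w ∈ (a :: b :: t).head? ∨ w ∈ (a :: b :: t).getLast?} ⊆
        {a, (b :: t).getLast (cons_ne_nil b t)} := by
      intro w
      simp only [head?_cons, Option.mem_def, Option.some.injEq, getLast?_cons_cons,
        getLast?_eq_some_getLast (cons_ne_nil b t), Set.mem_ofPred_eq, Set.mem_insert_iff,
        Set.mem_singleton_iff]
      tauto
    calc _ ≤ ({a, (b :: t).getLast (cons_ne_nil b t)} : Set V).ncard :=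
          Set.ncard_le_ncard hsub (Set.toFinite _)
      _ ≤ 2 := (Set.ncard_insert_le _ _).trans (by simp)
      _ = min 2 (a :: b :: t).length := by simp

end Counting

section CtoXPath

variable {A : V → V → Prop} {c : List V} {x : V}

theorem IsCtoXPath.exists_eq_cons_append (hx : x ∉ c) {l : List V} {u : V}
    (h : IsCtoXPath A c l u x) : ∃ m, l = u :: m ++ [x] := by
  obtain ⟨⟨-, hhead, hlast⟩, huc, -⟩ := h
  obtain ⟨ys, rfl⟩ := List.getLast?_eq_some_iff.1 hlast
  cases ys with
  | nil => exact absurd (by simpa using hhead) (ne_of_mem_of_not_mem huc hx).symm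
  | cons a m =>
    obtain rfl : a = u := by simpa using hhead
    exact ⟨m, rfl⟩

theorem isCtoXPath_cons_append_iff (hx : x ∉ c) {u : V} {m : List V} :
    IsCtoXPath A c (u :: m ++ [x]) u x ↔
      u ∈ c ∧ (∀ w ∈ m, w ∉ c) ∧ x ∉ m ∧ m.Nodup ∧ (u :: m ++ [x]).IsChain A := by
  constructor
  · rintro ⟨⟨⟨-, hnd, hch⟩, -, -⟩, huc, honly⟩
    simp only [cons_append, nodup_cons, mem_append, mem_singleton, not_or, nodup_append] at hnd
    refine ⟨huc, fun w hw hwc => hnd.1.1 (honly w (by simp [hw]) hwc ▸ hw), ?_, hnd.2.1, hch⟩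
    exact fun hxm => hnd.2.2.2 x hxm x rfl rfl
  · rintro ⟨huc, hm, hxm, hnd, hch⟩
    refine ⟨⟨⟨by simp, ?_, hch⟩, by simp, getLast?_concat⟩, huc, ?_⟩
    · have hum : u ∉ m := fun h => hm u h huc
      have hmx : ∀ w ∈ m, w ≠ x := fun w hw hwx => hxm (hwx ▸ hw)
      simpa [nodup_append, hum, hnd, ne_of_mem_of_not_mem huc hx] using hmx
    · intro w hw hwc
      simp only [cons_append, mem_cons, mem_append, not_mem_nil, or_false] at hw
      rcases hw with rfl | hw | rfl
      · rfl
      · exact absurd hwc (hm w hw)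
      · exact absurd hwc hx

theorem isXtoCPath_iff {l : List V} {v : V} :
    IsXtoCPath A c l x v ↔ IsCtoXPath (flip A) c l.reverse v x := by
  simp only [IsXtoCPath, IsCtoXPath, isPathFromTo_reverse, mem_reverse]

theorem isCtoXPath_singleton (hx : x ∉ c) {a : V} (ha : a ∈ c) (hax : A a x) :
    IsCtoXPath A c (a :: [] ++ [x]) a x :=
  (isCtoXPath_cons_append_iff hx).2 ⟨ha, by simp, by simp, nodup_nil, by simpa using hax⟩

theorem isCtoXPath_pair (hloops : ∀ v, ¬ A v v) (hx : x ∉ c) {a w : V} (ha : a ∈ c)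
    (hw : w ∉ c) (haw : A a w) (hwx : A w x) : IsCtoXPath A c (a :: [w] ++ [x]) a x :=
  (isCtoXPath_cons_append_iff hx).2 ⟨ha, by simpa, fun h => hloops w (mem_singleton.1 h ▸ hwx),
    nodup_singleton w, by simp [haw, hwx]⟩

theorem exists_isCtoXPath_suffix {l : List V} (hl : IsPathOn A l) (hlast : l.getLast? = some x)
    (hlc : ∃ a ∈ l, a ∈ c) : ∃ u l', IsCtoXPath A c l' u x ∧ l' <:+ l := by
  induction l with
  | nil => simp at hlc
  | cons a t ih =>
    by_cases ht : ∃ b ∈ t, b ∈ c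
    · have htne : t ≠ [] := by rintro rfl; simp at ht
      obtain ⟨hne, hnd, hch⟩ := hl
      obtain ⟨u, l', h, hsuf⟩ := ih ⟨htne, hnd.of_cons, hch.tail⟩
        (by simpa [getLast?_cons, getLast?_eq_some_getLast htne] using hlast) ht
      exact ⟨u, l', h, hsuf.trans (suffix_cons a t)⟩
    · simp only [not_exists, not_and] at ht
      have hac : a ∈ c := by
        obtain ⟨b, hb, hbc⟩ := hlc
        rcases mem_cons.1 hb with rfl | hb
        exacts [hbc, absurd hbc (ht b hb)]
      refine ⟨a, a :: t, ⟨⟨hl, rfl, hlast⟩, hac, ?_⟩, suffix_refl _⟩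
      intro v hv hvc
      rcases mem_cons.1 hv with rfl | hv
      exacts [rfl, absurd hvc (ht v hv)]

theorem exists_isCtoXPath (hto : ∃ u ∈ c, ∃ l, IsPathFromTo A l u x) :
    ∃ u l, IsCtoXPath A c l u x := by
  obtain ⟨a, hac, l, hl, hhead, hlast⟩ := hto
  obtain ⟨u, l', h, -⟩ := exists_isCtoXPath_suffix hl hlast ⟨a, mem_of_mem_head? hhead, hac⟩
  exact ⟨u, l', h⟩

theorem IsCtoXPath.cons_of_arc (hx : x ∉ c) {u a w : V} {s t : List V}
    (hP : IsCtoXPath A c (u :: (s ++ w :: t) ++ [x]) u x) (ha : a ∈ c) (haw : A a w) :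
    IsCtoXPath A c (a :: (w :: t) ++ [x]) a x := by
  obtain ⟨-, hm, hxm, hnd, hch⟩ := (isCtoXPath_cons_append_iff hx).1 hP
  refine (isCtoXPath_cons_append_iff hx).2 ⟨ha, fun v hv => hm v (by simp_all), ?_,
    hnd.sublist (sublist_append_right s _), ?_⟩
  · exact fun h => hxm (mem_append_right s h)
  · have : ((w :: t) ++ [x]).IsChain A := hch.suffix ⟨u :: s, by simp⟩
    simpa [haw] using this

theorem IsCtoXPath.append_of_arc (hx : x ∉ c) {u w : V} {s t : List V}
    (hP : IsCtoXPath A c (u :: (s ++ w :: t) ++ [x]) u x) (hwx : A w x) :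
    IsCtoXPath A c (u :: (s ++ [w]) ++ [x]) u x := by
  obtain ⟨hu, hm, hxm, hnd, hch⟩ := (isCtoXPath_cons_append_iff hx).1 hP
  have hsub : s ++ [w] <+ s ++ w :: t := (singleton_sublist.2 mem_cons_self).append_left s
  refine (isCtoXPath_cons_append_iff hx).2 ⟨hu, fun v hv => hm v (hsub.subset hv),
    fun h => hxm (hsub.subset h), hnd.sublist hsub, ?_⟩
  have hpre : (u :: s ++ [w]).IsChain A := hch.prefix ⟨t ++ [x], by simp⟩
  refine isChain_append.2 ⟨by simpa using hpre, isChain_singleton x, ?_⟩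
  intro a ha b hb
  rw [← cons_append, getLast?_concat, Option.mem_some_iff] at ha
  rw [head?_cons, Option.mem_some_iff] at hb
  exact ha ▸ hb ▸ hwx

end CtoXPath

section NoBypass

variable {A : V → V → Prop} {c : List V} {x : V}

theorem IsCtoXPath.exists_mem_mem_of_ne (hx : x ∉ c)
    (hnb : NoBypassThrough A c x) {u v : V} {mp mq : List V}
    (hP : IsCtoXPath A c (u :: mp ++ [x]) u x)
    (hQ : IsCtoXPath (flip A) c (v :: mq ++ [x]) v x) (huv : u ≠ v) : ∃ w ∈ mp, w ∈ mq := by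
  obtain ⟨huc, hmp, hxp, hndp, hchp⟩ := (isCtoXPath_cons_append_iff hx).1 hP
  obtain ⟨hvc, hmq, hxq, hndq, hchq⟩ := (isCtoXPath_cons_append_iff hx).1 hQ
  by_contra! hdisj
  have hchq' : ([x] ++ (mq.reverse ++ [v])).IsChain A := by
    simpa [flip] using List.isChain_reverse.2 hchq
  refine hnb ⟨u :: mp ++ [x] ++ (mq.reverse ++ [v]), ⟨⟨by simp, ?_, hchp.append_overlap hchq'
    (by simp)⟩, by simp only [length_append, length_cons, length_reverse, length_nil]; omega,
    by simpa using huc, ?_, ?_⟩, by simp⟩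
  · have hum : u ∉ mp := fun h => hmp u h huc
    have hvq : v ∉ mq := fun h => hmq v h hvc
    have hvp : v ∉ mp := fun h => hmp v h hvc
    have huq : u ∉ mq := fun h => hmq u h huc
    simp only [cons_append, append_assoc, nodup_cons, nodup_append,
      nodup_reverse, mem_append, mem_cons, mem_reverse, not_mem_nil, or_false]
    grind
  · intro b hb
    rw [← append_assoc, getLast?_concat, Option.mem_some_iff] at hb
    exact hb ▸ hvc
  · intro w hw
    simp only [cons_append, tail_cons, ← append_assoc, dropLast_concat, mem_append,
      mem_singleton, mem_reverse] at hw
    rcases hw with (hw | rfl) | hw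
    exacts [hmp w hw, hx, hmq w hw]

theorem IsCtoXPath.eq_of_arc (hx : x ∉ c) (hnb : NoBypassThrough A c x)
    {l : List V} {u b : V} (hP : IsCtoXPath A c l u x) (hb : b ∈ c) (hxb : A x b) : u = b := by
  obtain ⟨m, rfl⟩ := hP.exists_eq_cons_append hx
  by_contra h
  obtain ⟨w, -, hw⟩ :=
    hP.exists_mem_mem_of_ne hx hnb (isCtoXPath_singleton (A := flip A) hx hb hxb) h
  simp at hw

theorem eq_of_arc_of_arc (hx : x ∉ c) (hnb : NoBypassThrough A c x)
    (hto : ∃ u ∈ c, ∃ l, IsPathFromTo A l u x) {a b : V} (ha : a ∈ c) (hb : b ∈ c)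
    (hxa : A x a) (hxb : A x b) : a = b := by
  obtain ⟨u, l, hP⟩ := exists_isCtoXPath hto
  exact (hP.eq_of_arc hx hnb ha hxa).symm.trans (hP.eq_of_arc hx hnb hb hxb)

theorem eq_of_dAdj (hx : x ∉ c) (hnb : NoBypassThrough A c x)
    (hto : ∃ u ∈ c, ∃ l, IsPathFromTo A l u x) (hfrom : ∃ v ∈ c, ∃ l, IsPathFromTo A l x v)
    {a b : V} (ha : a ∈ c) (hb : b ∈ c) (hxa : DAdj A x a) (hxb : DAdj A x b) : a = b := by
  rcases hxa with hxa | hax <;> rcases hxb with hxb | hbx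
  · exact eq_of_arc_of_arc hx hnb hto ha hb hxa hxb
  · exact ((isCtoXPath_singleton hx hb hbx).eq_of_arc hx hnb ha hxa).symm
  · exact (isCtoXPath_singleton hx ha hax).eq_of_arc hx hnb hb hxb
  · exact eq_of_arc_of_arc (A := flip A) hx hnb.flip
      (hfrom.imp fun _ ⟨hv, h⟩ => ⟨hv, exists_isPathFromTo_flip.2 h⟩) ha hb hax hbx

theorem degOn_eq_zero (hx : x ∉ c) (hnb : NoBypassThrough A c x)
    (hto : ∃ u ∈ c, ∃ l, IsPathFromTo A l u x) (hfrom : ∃ v ∈ c, ∃ l, IsPathFromTo A l x v)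
    {y : V} (hy : y ∈ c) (hxy : DAdj A x y) : degOn A x ({v | v ∈ c} \ {y}) = 0 := by
  have h : ∀ w ∈ ({v | v ∈ c} \ {y} : Set V), ¬ DAdj A x w := fun w ⟨hw, hwy⟩ hxw =>
    hwy (eq_of_dAdj hx hnb hto hfrom hw hy hxw hxy)
  have hout : {w ∈ ({v | v ∈ c} \ {y} : Set V) | A x w} = ∅ :=
    Set.eq_empty_of_forall_notMem fun w ⟨hw, hxw⟩ => h w hw (Or.inl hxw)
  have hin : {w ∈ ({v | v ∈ c} \ {y} : Set V) | A w x} = ∅ :=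
    Set.eq_empty_of_forall_notMem fun w ⟨hw, hwx⟩ => h w hw (Or.inr hwx)
  simp only [degOn, outDegOn, inDegOn, hout, hin, Set.ncard_empty]

theorem IsCycleOn.exists_ne (hc : IsCycleOn A c) (y : V) :
    ∃ z ∈ c, z ≠ y := by
  obtain ⟨hlen, hnd, -⟩ := hc
  match c, hlen, hnd with
  | a :: b :: t, _, hnd =>
    have hab : a ≠ b := fun h => (nodup_cons.1 hnd).1 (h ▸ mem_cons_self)
    by_cases hay : a = y
    exacts [⟨b, by simp, hay ▸ hab.symm⟩, ⟨a, by simp, hay⟩]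

theorem not_twoStronglyConnected_of_arc [Fintype V] (hx : x ∉ c)
    (hnb : NoBypassThrough A c x) {y z : V} (hy : y ∈ c) (hz : z ∈ c) (hzy : z ≠ y)
    (hxy : A x y) : ¬ TwoStronglyConnected A := by
  rintro ⟨-, h⟩
  obtain ⟨l, ⟨hl, hhead, hlast⟩, hyl⟩ :=
    h y z x hzy (ne_of_mem_of_not_mem hy hx).symm (ne_of_mem_of_not_mem hz hx)
  obtain ⟨u, l', hP, hsuf⟩ := exists_isCtoXPath_suffix hl hlast ⟨z, mem_of_mem_head? hhead, hz⟩
  obtain rfl : u = y := hP.eq_of_arc hx hnb hy hxy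
  exact hyl (hsuf.subset (mem_of_mem_head? hP.1.2.1))

theorem not_twoStronglyConnected [Fintype V] (hc : IsCycleOn A c) (hx : x ∉ c)
    (hnb : NoBypassThrough A c x) {y : V} (hy : y ∈ c) (hxy : DAdj A x y) :
    ¬ TwoStronglyConnected A := by
  obtain ⟨z, hz, hzy⟩ := hc.exists_ne y
  rcases hxy with hxy | hyx
  · exact not_twoStronglyConnected_of_arc hx hnb hy hz hzy hxy
  · exact fun h => not_twoStronglyConnected_of_arc (A := flip A) hx
      hnb.flip hy hz hzy hyx h.flip

theorem IsCtoXPath.mem_of_twoPath (hloops : ∀ v, ¬ A v v) (hx : x ∉ c)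
    (hnb : NoBypassThrough A c x) {u z w : V} {m : List V}
    (hP : IsCtoXPath A c (u :: m ++ [x]) u x) (hz : z ∈ c) (hzu : z ≠ u) (hwc : w ∉ c)
    (hxw : A x w) (hwz : A w z) : w ∈ m := by
  obtain ⟨w', hw'm, hw'⟩ := hP.exists_mem_mem_of_ne hx hnb
    (isCtoXPath_pair (A := flip A) hloops hx hz hwc hwz hxw) hzu.symm
  rwa [mem_singleton.1 hw'] at hw'm

theorem eq_of_arc_of_twoPath (hloops : ∀ v, ¬ A v v) (hx : x ∉ c)
    (hnb : NoBypassThrough A c x) {y z w : V} (hy : y ∈ c) (hz : z ∈ c) (hzy : z ≠ y)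
    (hxy : A x y) (hzw : A z w) (hwx : A w x) : w = y := by
  by_cases hw : w ∈ c
  · exact (isCtoXPath_singleton hx hw hwx).eq_of_arc hx hnb hy hxy
  · exact absurd ((isCtoXPath_pair hloops hx hz hw hzw hwx).eq_of_arc hx hnb hy hxy) hzy

theorem eq_of_twoPath_of_twoPath (hloops : ∀ v, ¬ A v v) (hx : x ∉ c)
    (hnb : NoBypassThrough A c x) {a b m w : V} (ha : a ∈ c) (hb : b ∈ c) (hab : a ≠ b)
    (hmc : m ∉ c) (ham : A a m) (hmx : A m x) (hwc : w ∉ c) (hxw : A x w) (hwb : A w b) :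
    w = m := by
  obtain ⟨w', h1, h2⟩ := (isCtoXPath_pair hloops hx ha hmc ham hmx).exists_mem_mem_of_ne hx hnb
    (isCtoXPath_pair (A := flip A) hloops hx hb hwc hwb hxw) hab
  rw [← mem_singleton.1 h1, mem_singleton.1 h2]

end NoBypass

section Shortest

variable {A : V → V → Prop} {c : List V} {x : V}

def IsShortestCtoXPath (A : V → V → Prop) (c l : List V) (u x : V) : Prop :=
  IsCtoXPath A c l u x ∧ ∀ u' l', IsCtoXPath A c l' u' x → l.length ≤ l'.length

theorem exists_isShortestCtoXPath (hto : ∃ u ∈ c, ∃ l, IsPathFromTo A l u x) :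
    ∃ u l, IsShortestCtoXPath A c l u x := by
  classical
  obtain ⟨u, l, h⟩ := exists_isCtoXPath hto
  have hex : ∃ n, ∃ u l, IsCtoXPath A c l u x ∧ l.length = n := ⟨_, u, l, h, rfl⟩
  obtain ⟨u, l, h, hlen⟩ := Nat.find_spec hex
  exact ⟨u, l, h, fun u' l' h' => hlen ▸ Nat.find_min' hex ⟨u', l', h', rfl⟩⟩

theorem IsXtoCPath.isShortestCtoXPath_reverse {l : List V} {v : V} (h : IsXtoCPath A c l x v)
    (hmin : ∀ v' l', IsXtoCPath A c l' x v' → l.length ≤ l'.length) :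
    IsShortestCtoXPath (flip A) c l.reverse v x :=
  ⟨isXtoCPath_iff.1 h, fun v' l' h' => by
    simpa using hmin v' l'.reverse (isXtoCPath_iff.2 (by rwa [reverse_reverse]))⟩

theorem IsShortestCtoXPath.getLast?_eq (hx : x ∉ c) {u w : V} {m : List V}
    (hP : IsShortestCtoXPath A c (u :: m ++ [x]) u x) (hw : w ∈ m) (hwx : A w x) :
    m.getLast? = some w := by
  obtain ⟨s, t, rfl⟩ := append_of_mem hw
  have := hP.2 u _ (hP.1.append_of_arc hx hwx)
  obtain rfl : t = [] := by simpa using this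
  simp

theorem IsShortestCtoXPath.head?_eq (hx : x ∉ c) {u a w : V} {m : List V}
    (hP : IsShortestCtoXPath A c (u :: m ++ [x]) u x) (hw : w ∈ m) (ha : a ∈ c) (haw : A a w) :
    m.head? = some w := by
  obtain ⟨s, t, rfl⟩ := append_of_mem hw
  have := hP.2 a _ (hP.1.cons_of_arc hx ha haw)
  obtain rfl : s = [] := by simpa using this
  simp

theorem IsShortestCtoXPath.length_le_one (hloops : ∀ v, ¬ A v v) (hx : x ∉ c) {u z w : V}
    {m : List V} (hP : IsShortestCtoXPath A c (u :: m ++ [x]) u x) (hz : z ∈ c) (hwc : w ∉ c)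
    (hzw : A z w) (hwx : A w x) : m.length ≤ 1 := by
  have := hP.2 z _ (isCtoXPath_pair hloops hx hz hwc hzw hwx)
  simp only [length_append, length_cons, length_nil] at this
  omega

theorem IsShortestCtoXPath.length_le_one_of_ncard_ne_zero (hloops : ∀ v, ¬ A v v)
    (hx : x ∉ c) {u z : V} {m : List V} (hP : IsShortestCtoXPath A c (u :: m ++ [x]) u x)
    (hz : z ∈ c) (hin : ∀ w ∈ c, ¬ A w x) (h : (heavyMid A z x).ncard ≠ 0) : m.length ≤ 1 := by
  obtain ⟨w, hzw, hwx, -⟩ := Set.nonempty_of_ncard_ne_zero h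
  exact hP.length_le_one hloops hx hz (hin w · hwx) hzw hwx

theorem IsShortestCtoXPath.heavyMid_subset (hloops : ∀ v, ¬ A v v) (hx : x ∉ c)
    (hnb : NoBypassThrough A c x) {u z : V} {m : List V}
    (hP : IsShortestCtoXPath A c (u :: m ++ [x]) u x) (hz : z ∈ c) (hzu : z ≠ u)
    (hout : ∀ w ∈ c, ¬ A x w) : heavyMid A x z ⊆ {w | w ∈ m.head? ∨ w ∈ m.getLast?} := by
  rintro w ⟨hxw, hwz, hzw_or_hwx⟩
  have hwm := hP.1.mem_of_twoPath hloops hx hnb hz hzu (hout w · hxw) hxw hwz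
  rcases hzw_or_hwx with hzw | hwx
  exacts [Or.inl (hP.head?_eq hx hwm hz hzw), Or.inr (hP.getLast?_eq hx hwm hwx)]

theorem IsShortestCtoXPath.ncard_heavyMid_le (hloops : ∀ v, ¬ A v v) (hx : x ∉ c)
    (hnb : NoBypassThrough A c x) {u z : V} {m : List V}
    (hP : IsShortestCtoXPath A c (u :: m ++ [x]) u x) (hz : z ∈ c) (hzu : z ≠ u)
    (hout : ∀ w ∈ c, ¬ A x w) : (heavyMid A x z).ncard ≤ min 2 m.length :=
  (Set.ncard_le_ncard (hP.heavyMid_subset hloops hx hnb hz hzu hout) ((List.finite_toSet m).subset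
    fun _ hw => hw.elim mem_of_mem_head? mem_of_mem_getLast?)).trans
    (ncard_setOf_mem_head?_or_mem_getLast?_le m)

theorem IsShortestCtoXPath.mem_getLast?_of_arc (hloops : ∀ v, ¬ A v v) (hx : x ∉ c)
    (hnb : NoBypassThrough A c x) {u z w : V} {m : List V}
    (hP : IsShortestCtoXPath A c (u :: m ++ [x]) u x) (hxu : A x u) (hz : z ∈ c) (hzu : z ≠ u)
    (hw : w ∈ heavyMid A x z) (hwc : w ∉ c) : w ∈ m.getLast? := by
  obtain ⟨hxw, hwz, hzw | hwx⟩ := hw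
  · have hwm := hP.1.mem_of_twoPath hloops hx hnb hz hzu hwc hxw hwz
    obtain ⟨s, t, rfl⟩ := append_of_mem hwm
    exact absurd ((hP.1.cons_of_arc hx hz hzw).eq_of_arc hx hnb hP.1.2.1 hxu) hzu
  · exact hP.getLast?_eq hx (hP.1.mem_of_twoPath hloops hx hnb hz hzu hwc hxw hwz) hwx

end Shortest

section DegreeBounds

variable [Fintype V] {A : V → V → Prop} {c : List V} {x : V}

theorem deg_add_deg_le_of_arc (hloops : ∀ v, ¬ A v v) (hx : x ∉ c)
    (hnb : NoBypassThrough A c x) (hto : ∃ u ∈ c, ∃ l, IsPathFromTo A l u x)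
    (hfrom : ∃ v ∈ c, ∃ l, IsPathFromTo A l x v) {y z : V} (hy : y ∈ c) (hxy : A x y)
    (hz : z ∈ c) (hzy : z ≠ y) : deg A x + deg A z ≤ 2 * Fintype.card V - 2 := by
  have hnadj : ¬ DAdj A x z := fun h => hzy (eq_of_dAdj hx hnb hto hfrom hz hy h (Or.inl hxy))
  refine deg_add_deg_le_of_ncard_heavyMid_le hloops (ne_of_mem_of_not_mem hz hx).symm hnadj ?_
  have hHzx : heavyMid A z x ⊆ {y} := fun w hw =>
    eq_of_arc_of_twoPath hloops hx hnb hy hz hzy hxy hw.1 hw.2.1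
  by_cases hyx : A y x
  · have hHxz : heavyMid A x z ⊆ {y} := fun w hw =>
      eq_of_arc_of_twoPath (A := flip A) hloops hx hnb.flip hy hz hzy hyx
        hw.2.1 hw.1
    have h1 := Set.ncard_le_ncard hHzx
    have h2 := Set.ncard_le_ncard hHxz
    rw [Set.ncard_singleton] at h1 h2
    omega
  · have hHzx_eq : heavyMid A z x = ∅ :=
      Set.eq_empty_of_forall_notMem fun w hw => hyx (Set.mem_singleton_iff.1 (hHzx hw) ▸ hw.2.1)
    obtain ⟨u, l, hP⟩ := exists_isShortestCtoXPath hto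
    obtain ⟨m, rfl⟩ := hP.1.exists_eq_cons_append hx
    obtain rfl : u = y := hP.1.eq_of_arc hx hnb hy hxy
    have hHxz : heavyMid A x z ⊆ insert u {w | w ∈ m.getLast?} := by
      intro w hw
      by_cases hwc : w ∈ c
      · exact Or.inl (hP.1.eq_of_arc hx hnb hwc hw.1).symm
      · exact Or.inr (hP.mem_getLast?_of_arc hloops hx hnb hxy hz hzy hw hwc)
    have h2 := (Set.ncard_le_ncard hHxz).trans (Set.ncard_insert_le _ _)
    have h3 : {w | w ∈ m.getLast?}.ncard ≤ 1 := by
      cases m.getLast? <;> simp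
    rw [hHzx_eq, Set.ncard_empty]
    omega

theorem deg_add_deg_le_of_dAdj (hloops : ∀ v, ¬ A v v) (hx : x ∉ c)
    (hnb : NoBypassThrough A c x) (hto : ∃ u ∈ c, ∃ l, IsPathFromTo A l u x)
    (hfrom : ∃ v ∈ c, ∃ l, IsPathFromTo A l x v) {y z : V} (hy : y ∈ c) (hxy : DAdj A x y)
    (hz : z ∈ c) (hzy : z ≠ y) : deg A x + deg A z ≤ 2 * Fintype.card V - 2 := by
  rcases hxy with hxy | hyx
  · exact deg_add_deg_le_of_arc hloops hx hnb hto hfrom hy hxy hz hzy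
  · simpa only [deg_flip] using deg_add_deg_le_of_arc (A := flip A) hloops hx
      hnb.flip
      (hfrom.imp fun _ ⟨hv, h⟩ => ⟨hv, exists_isPathFromTo_flip.2 h⟩)
      (hto.imp fun _ ⟨hu, h⟩ => ⟨hu, exists_isPathFromTo_flip.2 h⟩) hy hyx hz hzy

variable {u v : V} {mp mq : List V}

theorem deg_add_deg_le_of_ne_of_ne (hloops : ∀ v, ¬ A v v) (hx : x ∉ c)
    (hnb : NoBypassThrough A c x) (hnadj : ∀ y ∈ c, ¬ DAdj A x y)
    (hP : IsShortestCtoXPath A c (u :: mp ++ [x]) u x)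
    (hQ : IsShortestCtoXPath (flip A) c (v :: mq ++ [x]) v x)
    {z : V} (hz : z ∈ c) (hzu : z ≠ u) (hzv : z ≠ v) :
    deg A x + deg A z ≤ 2 * Fintype.card V - 2 := by
  have hout : ∀ w ∈ c, ¬ A x w := fun w hw h => hnadj w hw (Or.inl h)
  have hin : ∀ w ∈ c, ¬ A w x := fun w hw h => hnadj w hw (Or.inr h)
  have hnb' := hnb.flip
  refine deg_add_deg_le_of_ncard_heavyMid_le hloops (ne_of_mem_of_not_mem hz hx).symm
    (hnadj z hz) ?_
  have h1 := IsShortestCtoXPath.ncard_heavyMid_le (A := flip A) hloops hx hnb' hQ hz hzv hin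
  have h2 := hP.ncard_heavyMid_le hloops hx hnb hz hzu hout
  have h1' := hP.length_le_one_of_ncard_ne_zero hloops hx hz hin
  have h2' := IsShortestCtoXPath.length_le_one_of_ncard_ne_zero (A := flip A) hloops hx hQ hz hout
  rw [heavyMid_flip] at h1 h2'
  omega

theorem deg_add_deg_le_or (hloops : ∀ v, ¬ A v v) (hx : x ∉ c)
    (hnb : NoBypassThrough A c x) (hnadj : ∀ y ∈ c, ¬ DAdj A x y)
    (hP : IsShortestCtoXPath A c (u :: mp ++ [x]) u x)
    (hQ : IsShortestCtoXPath (flip A) c (v :: mq ++ [x]) v x) (huv : u ≠ v) :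
    deg A x + deg A u ≤ 2 * Fintype.card V - 2 ∨ deg A x + deg A v ≤ 2 * Fintype.card V - 2 := by
  have hout : ∀ w ∈ c, ¬ A x w := fun w hw h => hnadj w hw (Or.inl h)
  have hin : ∀ w ∈ c, ¬ A w x := fun w hw h => hnadj w hw (Or.inr h)
  have hu : u ∈ c := hP.1.2.1
  have hv : v ∈ c := hQ.1.2.1
  by_cases hHvx : (heavyMid A v x).ncard = 0
  · refine Or.inr (deg_add_deg_le_of_ncard_heavyMid_le hloops (ne_of_mem_of_not_mem hv hx).symm
      (hnadj v hv) ?_)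
    have := hP.ncard_heavyMid_le hloops hx hnb hv huv.symm hout
    omega
  · refine Or.inl (deg_add_deg_le_of_ncard_heavyMid_le hloops (ne_of_mem_of_not_mem hu hx).symm
      (hnadj u hu) ?_)
    obtain ⟨m, hvm, hmx, -⟩ := Set.nonempty_of_ncard_ne_zero hHvx
    have h1 := IsShortestCtoXPath.ncard_heavyMid_le (A := flip A) hloops hx
      hnb.flip hQ hu huv hin
    have h2' := IsShortestCtoXPath.length_le_one_of_ncard_ne_zero (A := flip A) hloops hx hQ hu hout
    have h2 : (heavyMid A x u).ncard ≤ 1 := by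
      refine (Set.ncard_le_ncard (t := {m}) fun w hw => ?_).trans (Set.ncard_singleton m).le
      exact eq_of_twoPath_of_twoPath hloops hx hnb hv hu huv.symm (hin m · hmx) hvm hmx
        (hout w · hw.1) hw.1 hw.2.1
    rw [heavyMid_flip] at h1 h2'
    omega

theorem exists_forall_deg_add_deg_le (hloops : ∀ v, ¬ A v v) (hx : x ∉ c)
    (hnb : NoBypassThrough A c x) (hnadj : ∀ y ∈ c, ¬ DAdj A x y)
    (hP : IsShortestCtoXPath A c (u :: mp ++ [x]) u x)
    (hQ : IsShortestCtoXPath (flip A) c (v :: mq ++ [x]) v x) (huv : u ≠ v) :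
    ∃ e ∈ ({u, v} : Set V), ∀ z ∈ c, z ≠ e → deg A x + deg A z ≤ 2 * Fintype.card V - 2 := by
  have key {z} := deg_add_deg_le_of_ne_of_ne hloops hx hnb hnadj hP hQ (z := z)
  rcases deg_add_deg_le_or hloops hx hnb hnadj hP hQ huv with h | h
  · exact ⟨v, by simp, fun z hz hzv => (eq_or_ne z u).elim (· ▸ h) (key hz · hzv)⟩
  · exact ⟨u, by simp, fun z hz hzu => (eq_or_ne z v).elim (· ▸ h) (key hz hzu ·)⟩

end DegreeBounds

theorem no_bypass_degree_bounds_general [Fintype V] (A : V → V → Prop)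
    (hloops : ∀ v, ¬ A v v)
    (c : List V) (hc : IsCycleOn A c)
    (x : V) (hx : x ∉ c)
    (hto : ∃ u ∈ c, ∃ l, IsPathFromTo A l u x)
    (hfrom : ∃ v ∈ c, ∃ l, IsPathFromTo A l x v)
    (hnobypass : ¬ ∃ p, IsBypass A c p ∧ x ∈ p) :
    (∀ y ∈ c, DAdj A x y →
      ¬ TwoStronglyConnected A ∧ degOn A x ({v | v ∈ c} \ {y}) = 0 ∧
        ∀ z ∈ c, z ≠ y → deg A x + deg A z ≤ 2 * Fintype.card V - 2) ∧
    ((∀ y ∈ c, ¬ DAdj A x y) →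
      ∀ (u : V) (pl : List V), IsCtoXPath A c pl u x →
        (∀ (u' : V) (l' : List V), IsCtoXPath A c l' u' x →
          pl.length ≤ l'.length) →
      ∀ (v : V) (ql : List V), IsXtoCPath A c ql x v →
        (∀ (v' : V) (l' : List V), IsXtoCPath A c l' x v' →
          ql.length ≤ l'.length) →
      (u ≠ v → ∃ e ∈ ({u, v} : Set V), ∀ z ∈ c, z ≠ e →
          deg A x + deg A z ≤ 2 * Fintype.card V - 2) ∧
      (u = v → ∀ z ∈ c, z ≠ u →
          deg A x + deg A z ≤ 2 * Fintype.card V - 2)) := by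
  refine ⟨fun y hy hxy => ⟨not_twoStronglyConnected hc hx hnobypass hy hxy,
    degOn_eq_zero hx hnobypass hto hfrom hy hxy,
    fun z hz hzy => deg_add_deg_le_of_dAdj hloops hx hnobypass hto hfrom hy hxy hz hzy⟩, ?_⟩
  intro hnadj u pl hpl hplmin v ql hql hqlmin
  obtain ⟨mp, rfl⟩ := hpl.exists_eq_cons_append hx
  have hQ := hql.isShortestCtoXPath_reverse hqlmin
  obtain ⟨mq, hmq⟩ := hQ.1.exists_eq_cons_append hx
  rw [hmq] at hQ
  exact ⟨exists_forall_deg_add_deg_le hloops hx hnobypass hnadj ⟨hpl, hplmin⟩ hQ,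
    fun huv z hz hzu => deg_add_deg_le_of_ne_of_ne hloops hx hnobypass hnadj ⟨hpl, hplmin⟩ hQ hz
      hzu (huv ▸ hzu)⟩

/-- Lemma 3.5. -/
theorem no_bypass_degree_bounds [Fintype V] (A : V → V → Prop)
    (hloops : ∀ v, ¬ A v v)
    (c : List V) (hc : IsCycleOn A c) (hnonham : ∃ v : V, v ∉ c)
    (x : V) (hx : x ∉ c)
    (hto : ∃ u ∈ c, ∃ l, IsPathFromTo A l u x)
    (hfrom : ∃ v ∈ c, ∃ l, IsPathFromTo A l x v)
    (hnobypass : ¬ ∃ p, IsBypass A c p ∧ x ∈ p) :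
    (∀ y ∈ c, DAdj A x y →
      ¬ TwoStronglyConnected A ∧ degOn A x ({v | v ∈ c} \ {y}) = 0 ∧
        ∀ z ∈ c, z ≠ y → deg A x + deg A z ≤ 2 * Fintype.card V - 2) ∧
    ((∀ y ∈ c, ¬ DAdj A x y) →
      ∀ (u : V) (pl : List V), IsCtoXPath A c pl u x →
        (∀ (u' : V) (l' : List V), IsCtoXPath A c l' u' x →
          pl.length ≤ l'.length) →
      ∀ (v : V) (ql : List V), IsXtoCPath A c ql x v →
        (∀ (v' : V) (l' : List V), IsXtoCPath A c l' x v' →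
          ql.length ≤ l'.length) →
      (u ≠ v → ∃ e ∈ ({u, v} : Set V), ∀ z ∈ c, z ≠ e →
          deg A x + deg A z ≤ 2 * Fintype.card V - 2) ∧
      (u = v → ∀ z ∈ c, z ≠ u →
          deg A x + deg A z ≤ 2 * Fintype.card V - 2)) :=
  no_bypass_degree_bounds_general A hloops c hc x hx hto hfrom hnobypass
end

section
/- Let Y be a subset of the vertices of a digraph D of order n and suppose Y satisfies condition A0. If x, y and x, z are two distinct pairs of nonadjacent vertices in Y, then d(x) + d(y) ≥ 2n − 1 or d(x) + d(z) ≥ 2n − 1. -/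
/-!
Basic definitions for finite digraphs (no loops, no multiple arcs), where the arc
relation is `A : V → V → Prop`.  Paths and cycles are given as lists of (distinct)
vertices.
-/

variable {V : Type*}

/-- Lemma 3.7. -/
theorem degree_sum_of_condA0 [Fintype V] (A : V → V → Prop)
    (hloops : ∀ v, ¬ A v v)
    (Y : Set V) (hA0 : CondA0 A Y)
    (x y z : V) (hx : x ∈ Y) (hy : y ∈ Y) (hz : z ∈ Y)
    (hxy : x ≠ y) (hxz : x ≠ z) (hyz : y ≠ z)
    (hnadjxy : ¬ DAdj A x y) (hnadjxz : ¬ DAdj A x z) :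
    deg A x + deg A y ≥ 2 * Fintype.card V - 1 ∨
      deg A x + deg A z ≥ 2 * Fintype.card V - 1 := by
  have hAxz : ¬ A x z := fun h => hnadjxz (Or.inl h)
  have hAzx : ¬ A z x := fun h => hnadjxz (Or.inr h)
  have hAxy : ¬ A x y := fun h => hnadjxy (Or.inl h)
  have hAyx : ¬ A y x := fun h => hnadjxy (Or.inr h)
  obtain ⟨h1, h2⟩ := hA0 x hx y hy z hz hxy hxz hyz hnadjxy
  obtain ⟨h3, h4⟩ := hA0 x hx z hz y hy hxz hxy (Ne.symm hyz) hnadjxz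
  have e1 := h1 hAxz
  have e2 := h2 hAzx
  have e3 := h3 hAxy
  have e4 := h4 hAyx
  simp only [deg] at *
  omega
end

section
/- Let D be a digraph of order n and let x, y be distinct vertices with d(x) + d(y) ≥ 2n − 1. If D is {x,y}-strongly connected, then x and y lie on a common directed cycle of D on which they are at distance at most two (i.e., the cycle contains a subpath from x to y, or from y to x, of length at most two). -/
/-!
Basic definitions for finite digraphs (no loops, no multiple arcs), where the arc
relation is `A : V → V → Prop`.  Paths and cycles are given as lists of (distinct)
vertices.
-/

variable {V : Type*}

/-!
If `x → y` is an arc, it closes a `(y, x)`-path into a cycle, and symmetrically. Otherwise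
`N⁺(x) ∪ N⁻(y)` avoids `x` and `y`, and `N⁺(x) ∩ N⁻(y)` is the set `P` of midpoints
`x → z → y`, so `d⁺(x) + d⁻(y) ≤ n - 2 + |P|`; with the same bound for the set `Q` of
midpoints `y → w → x`, the degree condition gives `|P| + |Q| ≥ 3`. If `P` and `Q` are both
nonempty they therefore contain distinct `z`, `w`, and `x z y w` is a 4-cycle. If `Q` is empty,
take a shortest `(y, x)`-path `q`: `y` has at most one out-neighbour and `x` at most one
in-neighbour on `q`, so `d⁺(y) + d⁻(x) ≤ n - |q| + 2`. Were `P` contained in `q`, also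
`|P| ≤ |q| - 2`, and the degree sum would be at most `2n - 2`. Hence some `z ∈ P` lies off
`q`, and `z :: q` is the required cycle.
-/

lemma exists_mem_ne_of_three_le_ncard_add_ncard {α : Type*} {s t : Set α} (hs : s.Nonempty)
    (ht : t.Nonempty) (h : 3 ≤ s.ncard + t.ncard) : ∃ a ∈ s, ∃ b ∈ t, a ≠ b := by
  obtain ⟨a₀, ha₀⟩ := hs
  obtain ⟨b₀, hb₀⟩ := ht
  by_cases hs2 : 1 < s.ncard
  · obtain ⟨a, ha, hab⟩ := Set.exists_ne_of_one_lt_ncard hs2 b₀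
    exact ⟨a, ha, b₀, hb₀, hab⟩
  · obtain ⟨b, hb, hba⟩ := Set.exists_ne_of_one_lt_ncard (by omega : 1 < t.ncard) a₀
    exact ⟨a₀, ha₀, b, hb, hba.symm⟩

namespace IsPathFromTo

variable {A : V → V → Prop} {l : List V} {a b : V}

lemma exists_eq_cons (h : IsPathFromTo A l a b) : ∃ t, l = a :: t := by
  obtain ⟨⟨hne, -, -⟩, hhead, -⟩ := h
  cases l with
  | nil => exact absurd rfl hne
  | cons c t => exact ⟨t, by simp_all⟩

lemma getElem_length_sub_one (h : IsPathFromTo A l a b) :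
    l[l.length - 1]'(Nat.sub_lt (List.length_pos_iff.2 h.1.1) one_pos) = b := by
  have hlast := h.2.2
  rw [List.getLast?_eq_getElem?, List.getElem?_eq_some_iff] at hlast
  exact hlast.2

lemma two_le_length (h : IsPathFromTo A l a b) (hab : a ≠ b) : 2 ≤ l.length := by
  obtain ⟨t, rfl⟩ := h.exists_eq_cons
  cases t with
  | nil => exact absurd (by simpa using h.2.2) hab
  | cons c t => simp

lemma reverse (h : IsPathFromTo A l a b) : IsPathFromTo (flip A) l.reverse b a := by
  obtain ⟨⟨hne, hnd, hch⟩, hhead, hlast⟩ := h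
  exact ⟨⟨by simpa using hne, List.nodup_reverse.2 hnd, List.isChain_reverse.2 hch⟩,
    by rw [List.head?_reverse, hlast], by rw [List.getLast?_reverse, hhead]⟩

lemma cons_drop {t : List V} (h : IsPathFromTo A (a :: t) a b) {k : ℕ} (hk : k < t.length)
    (harc : A a t[k]) : IsPathFromTo A (a :: t.drop k) a b := by
  obtain ⟨⟨-, hnd, hch⟩, -, hlast⟩ := h
  rw [List.nodup_cons] at hnd
  replace hch := List.isChain_cons.1 hch
  refine ⟨⟨List.cons_ne_nil _ _, ?_, ?_⟩, rfl, ?_⟩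
  · exact List.nodup_cons.2 ⟨fun ha => hnd.1 (List.mem_of_mem_drop ha),
      hnd.2.sublist (List.drop_sublist _ _)⟩
  · refine List.isChain_cons.2 ⟨?_, hch.2.drop k⟩
    simpa [List.head?_drop, List.getElem?_eq_getElem hk] using harc
  · rw [List.getLast?_cons, List.getLast?_drop, if_neg (by omega)]
    rwa [List.getLast?_cons] at hlast

end IsPathFromTo

def IsShortestPath (A : V → V → Prop) (q : List V) (a b : V) : Prop :=
  IsPathFromTo A q a b ∧ ∀ l, IsPathFromTo A l a b → q.length ≤ l.length

lemma exists_isShortestPath {A : V → V → Prop} {a b : V} (h : ∃ l, IsPathFromTo A l a b) :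
    ∃ q, IsShortestPath A q a b := by
  classical
  obtain ⟨l₀, h₀⟩ := h
  have hex : ∃ m, ∃ l, IsPathFromTo A l a b ∧ l.length = m := ⟨_, l₀, h₀, rfl⟩
  obtain ⟨q, hq, hlen⟩ := Nat.find_spec hex
  exact ⟨q, hq, fun l hl => hlen ▸ Nat.find_min' hex ⟨l, hl, rfl⟩⟩

namespace IsShortestPath

variable {A : V → V → Prop} {q : List V} {a b : V}

lemma reverse (h : IsShortestPath A q a b) : IsShortestPath (flip A) q.reverse b a :=
  ⟨h.1.reverse, fun l hl => by simpa using h.2 _ hl.reverse⟩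

lemma ncard_outNeighbors_le_one (h : IsShortestPath A q a b) (ha : ¬ A a a) :
    {z | z ∈ q ∧ A a z}.ncard ≤ 1 := by
  obtain ⟨t, rfl⟩ := h.1.exists_eq_cons
  have eq_second : ∀ z, z ∈ a :: t → A a z → t.head? = some z := by
    rintro z hz haz
    obtain rfl | hzt := List.mem_cons.1 hz
    · exact absurd haz ha
    obtain ⟨k, hk, rfl⟩ := List.getElem_of_mem hzt
    -- an arc from `a` to any vertex of `q` beyond the second one would shortcut `q`
    have := h.2 _ (h.1.cons_drop hk haz)
    simp only [List.length_cons, List.length_drop] at this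
    obtain rfl : k = 0 := by omega
    rw [List.head?_eq_getElem?, List.getElem?_eq_getElem hk]
  rw [Set.ncard_le_one ((a :: t).finite_toSet.subset fun _ hz => hz.1)]
  rintro z₁ ⟨hz₁, haz₁⟩ z₂ ⟨hz₂, haz₂⟩
  exact Option.some.inj ((eq_second z₁ hz₁ haz₁).symm.trans (eq_second z₂ hz₂ haz₂))

lemma ncard_inNeighbors_le_one (h : IsShortestPath A q a b) (hb : ¬ A b b) :
    {z | z ∈ q ∧ A z b}.ncard ≤ 1 := by
  simpa [flip] using h.reverse.ncard_outNeighbors_le_one hb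

end IsShortestPath

def CycleReachesWithin (A : V → V → Prop) (x y : V) (k : ℕ) : Prop :=
  ∃ l : List V, IsCycleOn A l ∧ ∃ i j : Fin l.length,
    l.get i = x ∧ l.get j = y ∧ (l.length + j.val - i.val) % l.length ≤ k

lemma CycleReachesWithin.mono {A : V → V → Prop} {x y : V} {k m : ℕ}
    (h : CycleReachesWithin A x y k) (hkm : k ≤ m) : CycleReachesWithin A x y m :=
  let ⟨l, hl, i, j, hi, hj, hk⟩ := h
  ⟨l, hl, i, j, hi, hj, hk.trans hkm⟩

namespace IsPathFromTo

variable {A : V → V → Prop} {q : List V} {x y : V}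

lemma cycleReachesWithin_one (hq : IsPathFromTo A q y x) (hyx : y ≠ x) (hxy : A x y) :
    CycleReachesWithin A x y 1 := by
  obtain ⟨t, rfl⟩ := hq.exists_eq_cons
  have hlen := hq.two_le_length hyx
  have hcycle : IsCycleOn A (y :: t) := by
    refine ⟨hlen, hq.1.2.1, hq.1.2.2, ?_⟩
    simpa [hq.2.2] using hxy
  refine ⟨y :: t, hcycle, ⟨t.length, by simp⟩, ⟨0, by simp⟩, ?_, rfl, ?_⟩
  · simpa using hq.getElem_length_sub_one
  · simp only [List.length_cons]
    exact (Nat.mod_le _ _).trans (by omega)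

lemma cycleReachesWithin_two {z : V} (hq : IsPathFromTo A q y x) (hz : z ∉ q) (hxz : A x z)
    (hzy : A z y) : CycleReachesWithin A x y 2 := by
  obtain ⟨t, rfl⟩ := hq.exists_eq_cons
  have hcycle : IsCycleOn A (z :: y :: t) := by
    refine ⟨by simp, List.nodup_cons.2 ⟨hz, hq.1.2.1⟩,
      List.isChain_cons_cons.2 ⟨hzy, hq.1.2.2⟩, ?_⟩
    simpa [List.getLast?_cons_cons, hq.2.2] using hxz
  refine ⟨z :: y :: t, hcycle, ⟨t.length + 1, by simp⟩, ⟨1, by simp⟩, ?_, rfl, ?_⟩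
  · simpa using hq.getElem_length_sub_one
  · simp only [List.length_cons]
    exact (Nat.mod_le _ _).trans (by omega)

end IsPathFromTo

lemma cycleReachesWithin_two_of_ne {A : V → V → Prop} (hloops : ∀ v, ¬ A v v) {x y z w : V}
    (hxy : x ≠ y) (hxz : A x z) (hzy : A z y) (hyw : A y w) (hwx : A w x) (hzw : z ≠ w) :
    CycleReachesWithin A x y 2 := by
  have ne_of_arc : ∀ {u v}, A u v → u ≠ v := fun huv h => hloops _ (h ▸ huv)
  have hpath : IsPathFromTo A [y, w, x] y x :=
    ⟨⟨by simp, by simp [ne_of_arc hyw, ne_of_arc hwx, hxy.symm],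
      List.isChain_cons_cons.2 ⟨hyw, List.isChain_pair.2 hwx⟩⟩, rfl, rfl⟩
  exact hpath.cycleReachesWithin_two (by simp [ne_of_arc hzy, hzw, (ne_of_arc hxz).symm]) hxz hzy

lemma List.Nodup.ncard_setOf_mem {l : List V} (h : l.Nodup) : {z | z ∈ l}.ncard = l.length := by
  classical
  rw [← List.coe_toFinset, Set.ncard_coe_finset, List.toFinset_card_of_nodup h]

section Counting

variable [Fintype V] {A : V → V → Prop} {x y : V}

lemma outDeg_add_inDeg_add_two_le (hx : ¬ A x x) (hy : ¬ A y y) (hxy : x ≠ y)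
    (hnxy : ¬ A x y) :
    outDeg A x + inDeg A y + 2 ≤ Fintype.card V + {z | A x z ∧ A z y}.ncard := by
  have hsub : {z | A x z} ∪ {z | A z y} ⊆ ({x, y} : Set V)ᶜ := by
    rintro z (hz | hz) (rfl | rfl) <;> contradiction
  have hunion := Set.ncard_union_add_ncard_inter {z | A x z} {z | A z y}
  rw [show {z | A x z} ∩ {z | A z y} = {z | A x z ∧ A z y} from rfl] at hunion
  have hcompl := Set.ncard_add_ncard_compl ({x, y} : Set V)
  rw [Set.ncard_pair hxy, Nat.card_eq_fintype_card] at hcompl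
  have := Set.ncard_le_ncard hsub
  unfold outDeg inDeg
  omega

lemma ncard_midpoints_add_two_le_length {q : List V} (hq : IsPathFromTo A q y x)
    (hx : ¬ A x x) (hy : ¬ A y y) (hxy : x ≠ y) (hP : ∀ z, A x z → A z y → z ∈ q) :
    {z | A x z ∧ A z y}.ncard + 2 ≤ q.length := by
  have hdisj : Disjoint {z | A x z ∧ A z y} {x, y} := by
    rw [Set.disjoint_right]
    rintro _ (rfl | rfl) hz
    exacts [hx hz.1, hy hz.2]
  have hsub : {z | A x z ∧ A z y} ∪ {x, y} ⊆ {z | z ∈ q} := by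
    rintro z ((⟨hxz, hzy⟩ : A x z ∧ A z y) | rfl | rfl)
    · exact hP z hxz hzy
    · exact List.mem_of_getLast? hq.2.2
    · exact List.mem_of_head? hq.2.1
  have := Set.ncard_le_ncard hsub (List.finite_toSet q)
  rwa [Set.ncard_union_eq hdisj, Set.ncard_pair hxy, hq.1.2.1.ncard_setOf_mem] at this

lemma IsShortestPath.outDeg_add_inDeg_add_length_le {q : List V} (hq : IsShortestPath A q y x)
    (hx : ¬ A x x) (hy : ¬ A y y) (hQ : ∀ w, ¬ (A y w ∧ A w x)) :
    outDeg A y + inDeg A x + q.length ≤ Fintype.card V + 2 := by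
  set S := {z | z ∈ q}
  set U := {z | A y z} ∪ {z | A z x}
  have hU : U.ncard = outDeg A y + inDeg A x :=
    Set.ncard_union_eq (Set.disjoint_left.2 fun w hyw hwx => hQ w ⟨hyw, hwx⟩)
  have hon : (U ∩ S).ncard ≤ 2 := by
    have hsub : U ∩ S ⊆ {z | z ∈ q ∧ A y z} ∪ {z | z ∈ q ∧ A z x} := by
      rintro z ⟨hz | hz, hzq⟩
      exacts [Or.inl ⟨hzq, hz⟩, Or.inr ⟨hzq, hz⟩]
    have := (Set.ncard_le_ncard hsub).trans (Set.ncard_union_le _ _)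
    have := hq.ncard_outNeighbors_le_one hy
    have := hq.ncard_inNeighbors_le_one hx
    omega
  have hoff : (U \ S).ncard ≤ Sᶜ.ncard := Set.ncard_le_ncard fun _ hz => hz.2
  have hsplit := Set.ncard_inter_add_ncard_sdiff_eq_ncard U S
  have hcompl := Set.ncard_add_ncard_compl S
  rw [hq.1.1.2.1.ncard_setOf_mem, Nat.card_eq_fintype_card] at hcompl
  omega

lemma three_le_ncard_midpoints_add_ncard_midpoints (hloops : ∀ v, ¬ A v v) (hxy : x ≠ y)
    (hnxy : ¬ A x y) (hnyx : ¬ A y x) (hdeg : 2 * Fintype.card V - 1 ≤ deg A x + deg A y) :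
    3 ≤ {z | A x z ∧ A z y}.ncard + {w | A y w ∧ A w x}.ncard := by
  have := outDeg_add_inDeg_add_two_le (hloops x) (hloops y) hxy hnxy
  have := outDeg_add_inDeg_add_two_le (hloops y) (hloops x) hxy.symm hnyx
  have := Fintype.card_pos_iff.2 ⟨x⟩
  unfold deg at hdeg
  omega

lemma IsShortestPath.exists_midpoint_not_mem (hloops : ∀ v, ¬ A v v) (hxy : x ≠ y)
    (hnxy : ¬ A x y) (hdeg : 2 * Fintype.card V - 1 ≤ deg A x + deg A y)
    (hQ : ∀ w, ¬ (A y w ∧ A w x)) {q : List V} (hq : IsShortestPath A q y x) :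
    ∃ z, A x z ∧ A z y ∧ z ∉ q := by
  by_contra! hP
  have := outDeg_add_inDeg_add_two_le (hloops x) (hloops y) hxy hnxy
  have := hq.outDeg_add_inDeg_add_length_le (hloops x) (hloops y) hQ
  have := ncard_midpoints_add_two_le_length hq.1 (hloops x) (hloops y) hxy hP
  unfold deg at hdeg
  omega

end Counting

/-- Lemma 3.10. -/
theorem common_cycle_at_distance_two [Fintype V] (A : V → V → Prop)
    (hloops : ∀ v, ¬ A v v)
    (x y : V) (hxy : x ≠ y)
    (hdeg : deg A x + deg A y ≥ 2 * Fintype.card V - 1)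
    (hconn : SetStronglyConnected A {x, y}) :
    ∃ l : List V, IsCycleOn A l ∧
      ∃ i j : Fin l.length, l.get i = x ∧ l.get j = y ∧
        ((l.length + j.val - i.val) % l.length ≤ 2 ∨
         (l.length + i.val - j.val) % l.length ≤ 2) := by
  suffices h : CycleReachesWithin A x y 2 ∨ CycleReachesWithin A y x 2 by
    rcases h with ⟨l, hl, i, j, hi, hj, hij⟩ | ⟨l, hl, j, i, hj, hi, hji⟩
    exacts [⟨l, hl, i, j, hi, hj, .inl hij⟩, ⟨l, hl, i, j, hi, hj, .inr hji⟩]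
  obtain ⟨q, hq⟩ := exists_isShortestPath (hconn y (by simp) x (by simp) hxy.symm)
  obtain ⟨p, hp⟩ := exists_isShortestPath (hconn x (by simp) y (by simp) hxy)
  by_cases hxy_arc : A x y
  · exact .inl ((hq.1.cycleReachesWithin_one hxy.symm hxy_arc).mono one_le_two)
  by_cases hyx_arc : A y x
  · exact .inr ((hp.1.cycleReachesWithin_one hxy hyx_arc).mono one_le_two)
  by_cases hQ : ∃ w, A y w ∧ A w x
  · by_cases hP : ∃ z, A x z ∧ A z y
    · obtain ⟨z, ⟨hxz, hzy⟩, w, ⟨hyw, hwx⟩, hzw⟩ :=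
        exists_mem_ne_of_three_le_ncard_add_ncard hP hQ
          (three_le_ncard_midpoints_add_ncard_midpoints hloops hxy hxy_arc hyx_arc hdeg)
      exact .inl (cycleReachesWithin_two_of_ne hloops hxy hxz hzy hyw hwx hzw)
    · obtain ⟨w, hyw, hwx, hwp⟩ :=
        hp.exists_midpoint_not_mem hloops hxy.symm hyx_arc (by omega) (not_exists.1 hP)
      exact .inr (hp.1.cycleReachesWithin_two hwp hyw hwx)
  · obtain ⟨z, hxz, hzy, hzq⟩ :=
      hq.exists_midpoint_not_mem hloops hxy hxy_arc hdeg (not_exists.1 hQ)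
    exact .inl (hq.1.cycleReachesWithin_two hzq hxz hzy)
end

section
/- Let G be a 2-connected undirected graph of order n and let S be a subset of the vertices of G. If d(x) ≥ n/2 for all vertices x ∈ S, then S is cyclable in G; that is, G contains a cycle through all the vertices of S. -/
/-!
Basic definitions for finite digraphs (no loops, no multiple arcs), where the arc
relation is `A : V → V → Prop`.  Paths and cycles are given as lists of (distinct)
vertices.
-/

variable {V : Type*}

/-!
We add the vertices of `S` to a cycle one at a time. Let `C` be a cycle through a nonempty
`T ⊆ S` and let `x ∈ S` lie off `C`. As `G - y₀` is connected for some `y₀ ∈ T`, a path from `x`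
reaches `C` first at some `u ≠ y₀`; continuing once around `C` and stopping at the last vertex `y`
of `T` gives a path `R` from `x` to `y` through `T ∪ {x}` with at least three vertices. If no
cycle contains `R`, then `x` has no neighbour on the rest of the path, and `x` and `y` have no
common neighbour off it, so `d(x) + d(y) ≥ n` forces `d_R(x) + d_R(y) ≥ |R|`. Ore's crossing
argument then closes `R` into a cycle after all: otherwise the neighbours of `x` on `R` and the
successors along `R` of the neighbours of `y` on `R` would be disjoint subsets of `R - x`.
-/

namespace List

variable {α : Type*}

theorem exists_eq_append_cons_forall_not_left {p : α → Prop} {l : List α} (h : ∃ a ∈ l, p a) :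
    ∃ l₁ a l₂, l = l₁ ++ a :: l₂ ∧ p a ∧ ∀ b ∈ l₁, ¬p b := by
  classical
  obtain ⟨a, ha⟩ := Option.isSome_iff_exists.mp (find?_isSome (p := (p ·)).mpr (by simpa using h))
  obtain ⟨hpa, l₁, l₂, rfl, hl₁⟩ := find?_eq_some_iff_append.mp ha
  exact ⟨l₁, a, l₂, rfl, by simpa using hpa, by simpa using hl₁⟩

theorem exists_eq_append_cons_forall_not_right {p : α → Prop} {l : List α} (h : ∃ a ∈ l, p a) :
    ∃ l₁ a l₂, l = l₁ ++ a :: l₂ ∧ p a ∧ ∀ b ∈ l₂, ¬p b := by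
  obtain ⟨l₁, a, l₂, hl, hpa, hl₁⟩ :=
    exists_eq_append_cons_forall_not_left (l := l.reverse) (by simpa using h)
  refine ⟨l₂.reverse, a, l₁.reverse, ?_, hpa, by simpa using hl₁⟩
  simpa using congrArg reverse hl

theorem countP_add_countP_le_of_isChain {p q : α → Prop} [DecidablePred p] [DecidablePred q] :
    ∀ {a : α} {l : List α}, (a :: l).IsChain (fun u v => q u → ¬p v) →
      ¬q ((a :: l).getLast (cons_ne_nil a l)) → l.countP p + (a :: l).countP q ≤ l.length
  | a, [], _, hlast => by simpa using hlast
  | a, b :: l, hchain, hlast => by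
    have ih := countP_add_countP_le_of_isChain (isChain_cons_cons.mp hchain).2 hlast
    have hab := (isChain_cons_cons.mp hchain).1
    simp only [countP_cons, length_cons] at ih ⊢
    by_cases hqa : q a <;> by_cases hpb : p b <;> simp_all <;> omega

end List

namespace SimpleGraph

open Finset

variable {G : SimpleGraph V}

def IsCyclable (G : SimpleGraph V) (s : Set V) : Prop :=
  ∃ (v : V) (c : G.Walk v v), c.IsCycle ∧ ∀ w ∈ s, w ∈ c.support

theorem IsCyclable.mono {s t : Set V} (h : G.IsCyclable t) (hst : s ⊆ t) : G.IsCyclable s :=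
  let ⟨v, c, hc, ht⟩ := h
  ⟨v, c, hc, fun w hw => ht w (hst hw)⟩

theorem isCyclable_of_isPath {a b : V} {p : G.Walk a b} (hp : p.IsPath) (hlen : 2 ≤ p.length)
    (hba : G.Adj b a) : G.IsCyclable {w | w ∈ p.support} := by
  refine ⟨b, .cons hba p, (Walk.cons_isCycle_iff p hba).mpr ⟨hp, fun he => ?_⟩,
    fun w hw => Walk.support_cons hba p ▸ List.mem_cons_of_mem b hw⟩
  have := hp.length_eq_one_of_mem_edges (Sym2.eq_swap ▸ he)
  omega

theorem isCyclable_of_isChain {a : V} {l : List V} (hchain : (a :: l).IsChain G.Adj)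
    (hnodup : (a :: l).Nodup) (hlen : 2 ≤ l.length)
    (hclose : G.Adj ((a :: l).getLast (List.cons_ne_nil a l)) a) :
    G.IsCyclable {w | w ∈ a :: l} := by
  have hsupport := Walk.support_ofSupport (List.cons_ne_nil a l) hchain
  have := isCyclable_of_isPath (p := Walk.ofSupport _ _ hchain)
    (by rw [Walk.isPath_def, hsupport]; exact hnodup) (by rw [Walk.length_ofSupport]; simp; omega)
    hclose
  rwa [hsupport] at this

theorem isCyclable_of_isChain_of_adj {x w : V} {l₁ l₂ : List V}
    (hchain : (x :: (l₁ ++ w :: l₂)).IsChain G.Adj) (hnodup : (x :: (l₁ ++ w :: l₂)).Nodup)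
    (hl₁ : l₁ ≠ []) (hwx : G.Adj w x) : G.IsCyclable {v | v ∈ x :: (l₁ ++ [w])} := by
  have hprefix : x :: (l₁ ++ [w]) <+: x :: (l₁ ++ w :: l₂) := ⟨l₂, by simp⟩
  have := List.length_pos_iff.mpr hl₁
  exact isCyclable_of_isChain (hchain.prefix hprefix) (hnodup.sublist hprefix.sublist)
    (by simp; omega) (by simpa using hwx)

theorem isCyclable_of_crossing {A B : List V} {u v : V}
    (hchain : (A ++ u :: v :: B).IsChain G.Adj) (hnodup : (A ++ u :: v :: B).Nodup)
    (hlen : 3 ≤ (A ++ u :: v :: B).length)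
    (hx : G.Adj ((A ++ [u]).head (by simp)) v) (hy : G.Adj ((v :: B).getLast (by simp)) u) :
    G.IsCyclable {w | w ∈ A ++ u :: v :: B} := by
  have hperm : (u :: (A.reverse ++ v :: B)).Perm (A ++ u :: v :: B) :=
    ((List.reverse_perm A).append_right _).cons u |>.trans List.perm_middle.symm
  obtain ⟨hchainA, -, hchainB⟩ := List.isChain_append_cons_cons.mp hchain
  have hrev : (A ++ [u]).reverse.IsChain G.Adj :=
    List.isChain_reverse.mpr (hchainA.imp fun _ _ h => h.symm)
  refine (isCyclable_of_isChain ?_ (hperm.nodup_iff.mpr hnodup) ?_ ?_).mono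
    fun w hw => hperm.mem_iff.mpr hw
  · have : u :: (A.reverse ++ v :: B) = (A ++ [u]).reverse ++ v :: B := by simp
    rw [this]
    refine hrev.append hchainB ?_
    rw [List.getLast?_reverse, List.head?_eq_some_head (by simp)]
    simpa using hx
  · simp only [List.length_append, List.length_cons, List.length_reverse] at hlen ⊢
    omega
  · simpa using hy

theorem isCyclable_of_length_le_countP [DecidableRel G.Adj] {x : V} {l : List V}
    (hchain : (x :: l).IsChain G.Adj) (hnodup : (x :: l).Nodup) (hlen : 2 ≤ l.length)
    (hdeg : (x :: l).length ≤ (x :: l).countP (G.Adj x ·) +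
      (x :: l).countP (G.Adj ((x :: l).getLast (List.cons_ne_nil x l)) ·)) :
    G.IsCyclable {w | w ∈ x :: l} := by
  set y := (x :: l).getLast (List.cons_ne_nil x l) with hy
  have hcross : ¬(x :: l).IsChain (fun u v => G.Adj y u → ¬G.Adj x v) := fun h => by
    have := List.countP_add_countP_le_of_isChain h (G.irrefl (v := y))
    rw [List.countP_cons_of_neg (by simp), List.length_cons] at hdeg
    omega
  simp only [List.isChain_iff_forall_rel_of_append_cons_cons, not_forall, not_not] at hcross
  obtain ⟨u, v, A, B, hsplit, hyu, hxv⟩ := hcross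
  rw [hsplit] at hchain hnodup ⊢
  refine isCyclable_of_crossing hchain hnodup ?_ ?_ ?_
  · have := congrArg List.length hsplit
    simp only [List.length_append, List.length_cons] at this ⊢
    omega
  · cases A <;> simp_all
  · have : y = (A ++ u :: v :: B).getLast (by simp) := by simp only [hy, hsplit]
    simpa [this] using hyu

theorem degree_add_degree_le [Fintype V] [DecidableRel G.Adj] {x y : V} (R : Finset V)
    (h : ∀ w ∉ R, G.Adj x w → ¬G.Adj y w) :
    G.degree x + G.degree y ≤
      #{w ∈ R | G.Adj x w} + #{w ∈ R | G.Adj y w} + (Fintype.card V - #R) := by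
  classical
  have hsplit (z : V) : G.degree z = #{w ∈ R | G.Adj z w} + #{w ∈ Rᶜ | G.Adj z w} := by
    rw [← card_neighborFinset_eq_degree, neighborFinset_eq_filter, ← card_union_of_disjoint
      (disjoint_filter_filter disjoint_compl_right), ← filter_union, union_compl]
  have hout : #{w ∈ Rᶜ | G.Adj x w} + #{w ∈ Rᶜ | G.Adj y w} ≤ #Rᶜ := by
    rw [← card_union_of_disjoint]
    · exact card_le_card (union_subset (filter_subset _ _) (filter_subset _ _))
    · exact disjoint_filter.mpr fun w hw => h w (mem_compl.mp hw)
  rw [hsplit x, hsplit y, card_compl] at *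
  omega

theorem length_le_countP_add_countP [Fintype V] [DecidableRel G.Adj] {x y : V} {R : List V}
    (hR : R.Nodup) (hdeg : Fintype.card V ≤ G.degree x + G.degree y)
    (h : ∀ w ∉ R, G.Adj x w → ¬G.Adj y w) :
    R.length ≤ R.countP (G.Adj x ·) + R.countP (G.Adj y ·) := by
  classical
  have hcard (p : V → Prop) [DecidablePred p] : #{w ∈ R.toFinset | p w} = R.countP p := by
    rw [List.countP_eq_length_filter, ← List.toFinset_card_of_nodup (hR.filter _),
      List.toFinset_filter]
    simp
  have hdeg' := degree_add_degree_le R.toFinset fun w hw => h w (by simpa using hw)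
  have hR_le := R.toFinset.card_le_univ
  rw [hcard, hcard, List.toFinset_card_of_nodup hR] at hdeg'
  rw [List.toFinset_card_of_nodup hR] at hR_le
  omega

theorem isCyclable_of_isChain_of_degree [Fintype V] [DecidableRel G.Adj] {x y : V}
    {m l : List V} (hchain : (x :: (m ++ y :: l)).IsChain G.Adj)
    (hnodup : (x :: (m ++ y :: l)).Nodup) (hm : m ≠ [])
    (hdeg : Fintype.card V ≤ G.degree x + G.degree y) :
    G.IsCyclable {w | w ∈ x :: (m ++ [y])} := by
  have hprefix : x :: (m ++ [y]) <+: x :: (m ++ y :: l) := ⟨l, by simp⟩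
  have hR_nodup : (x :: (m ++ [y])).Nodup := hnodup.sublist hprefix.sublist
  by_contra hR
  have hx_tail : ∀ w ∈ y :: l, ¬G.Adj x w := by
    intro w hw hxw
    obtain ⟨l₁, l₂, hl⟩ := List.append_of_mem hw
    rw [hl, ← List.append_assoc] at hchain hnodup
    refine hR ((isCyclable_of_isChain_of_adj hchain hnodup (by simp [hm]) hxw.symm).mono ?_)
    have hy : y ∈ l₁ ++ [w] := by
      cases l₁ <;> simp_all
    intro v hv
    simp only [Set.mem_ofPred_eq, List.mem_cons, List.mem_append, List.not_mem_nil,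
      or_false] at hv hy ⊢
    rcases hv with rfl | hv | rfl <;> tauto
  have hx_out : ∀ w ∉ x :: (m ++ y :: l), G.Adj x w → ¬G.Adj y w := by
    intro w hw hxw hyw
    have hwR : w ∉ x :: (m ++ [y]) := fun h => hw (hprefix.subset h)
    refine hR ((isCyclable_of_isChain_of_adj (l₁ := m ++ [y]) (l₂ := []) ?_
      (hR_nodup.append (List.nodup_singleton w) (by simpa using hwR)) (by simp)
      hxw.symm).mono fun v hv => by simp at hv ⊢; tauto)
    refine (hchain.prefix hprefix).append (List.isChain_singleton w) fun a ha b hb => ?_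
    rw [← List.cons_append, List.getLast?_concat, Option.mem_def, Option.some_inj] at ha
    simp only [List.head?_cons, Option.mem_def, Option.some_inj] at hb
    exact ha ▸ hb ▸ hyw
  refine hR (isCyclable_of_length_le_countP (hchain.prefix hprefix) hR_nodup
    (by have := List.length_pos_iff.mpr hm; simp; omega) ?_)
  have hlast : (x :: (m ++ [y])).getLast (List.cons_ne_nil _ _) = y := by simp
  rw [hlast]
  exact length_le_countP_add_countP hR_nodup hdeg fun w hw hxw =>
    hx_out w (fun hP => hx_tail w (by simp_all) hxw) hxw

theorem exists_isPath_of_connected_induce_compl {w a b : V}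
    (hconn : (G.induce {w}ᶜ).Connected) (ha : a ≠ w) (hb : b ≠ w) :
    ∃ p : G.Walk a b, p.IsPath ∧ w ∉ p.support := by
  classical
  obtain ⟨q⟩ := hconn.preconnected ⟨a, Set.mem_compl_singleton_iff.mpr ha⟩
    ⟨b, Set.mem_compl_singleton_iff.mpr hb⟩
  let f : G.induce {w}ᶜ ↪g G := Embedding.induce {w}ᶜ
  have hw : w ∉ (q.toPath.1.map f.toHom).support := by
    rw [Walk.support_map, List.mem_map]
    rintro ⟨⟨v, hv⟩, -, hvw⟩
    exact hv hvw
  exact ⟨q.toPath.1.map f.toHom, q.toPath.2.map f.injective, hw⟩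

theorem Walk.IsCycle.exists_isPath_support {u v : V} {c : G.Walk v v} (hc : c.IsCycle)
    (hu : u ∈ c.support) :
    ∃ (w : V) (q : G.Walk u w), q.IsPath ∧ ∀ x, x ∈ q.support ↔ x ∈ c.support := by
  classical
  have hd := hc.rotate hu
  have hmem (x : V) : x ∈ (c.rotate u hu).support ↔ x ∈ c.support :=
    c.mem_support_rotate_iff u hu
  generalize c.rotate u hu = d at hd hmem
  cases d with
  | nil => exact absurd hd Walk.not_isCycle_nil
  | cons h q =>
    refine ⟨_, q.reverse, ((Walk.cons_isCycle_iff q h).mp hd).1.reverse, fun x => ?_⟩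
    rw [← hmem, Walk.support_reverse, List.mem_reverse, Walk.support_cons, List.mem_cons,
      or_iff_right_of_imp fun h => h ▸ q.end_mem_support]

theorem isCyclable_singleton [Fintype V] (hcard : 3 ≤ Fintype.card V)
    (hconn : ∀ w, (G.induce {w}ᶜ).Connected) (z : V) : G.IsCyclable {z} := by
  have hcard' : 3 ≤ ENat.card V := by simpa using hcard
  have hnbr : ∀ w ≠ z, ∃ a, G.Adj z a ∧ a ≠ w := by
    intro w hwz
    obtain ⟨v, hvz, hvw⟩ := ENat.exists_ne_ne_of_three_le hcard' z w
    obtain ⟨p, -, hwp⟩ := exists_isPath_of_connected_induce_compl (hconn w) hwz.symm hvw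
    have hp : ¬p.Nil := Walk.not_nil_of_ne hvz.symm
    exact ⟨p.snd, p.adj_snd hp, fun h => hwp (h ▸ p.getVert_mem_support 1)⟩
  obtain ⟨w, hwz, -⟩ := ENat.exists_ne_ne_of_three_le hcard' z z
  obtain ⟨a, hza, -⟩ := hnbr w hwz
  obtain ⟨b, hzb, hba⟩ := hnbr a (G.ne_of_adj hza).symm
  obtain ⟨p, hp, hzp⟩ :=
    exists_isPath_of_connected_induce_compl (hconn z) (G.ne_of_adj hza).symm (G.ne_of_adj hzb).symm
  have hp_length : 0 < p.length := Walk.not_nil_iff_lt_length.mp (Walk.not_nil_of_ne hba.symm)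
  exact (isCyclable_of_isPath (p := .cons hza p) (hp.cons hzp) (by simp; omega)
    hzb.symm).mono (by simp)

theorem Walk.IsCycle.exists_isChain_cons_append_cons {x y₀ v : V} {c : G.Walk v v}
    (hc : c.IsCycle) (hconn : (G.induce {y₀}ᶜ).Connected) (hy₀ : y₀ ∈ c.support)
    (hx : x ∉ c.support) :
    ∃ A u l, (x :: (A ++ u :: l)).IsChain G.Adj ∧ (x :: (A ++ u :: l)).Nodup ∧ u ≠ y₀ ∧
      ∀ w, w ∈ u :: l ↔ w ∈ c.support := by
  obtain ⟨z, hzc, hzy₀⟩ : ∃ z ∈ c.support, z ≠ y₀ := by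
    by_cases h : c.snd = y₀
    · exact ⟨c.penultimate, c.getVert_mem_support _, h ▸ hc.snd_ne_penultimate.symm⟩
    · exact ⟨c.snd, c.getVert_mem_support _, h⟩
  obtain ⟨p, hp, hy₀p⟩ := exists_isPath_of_connected_induce_compl (a := x) hconn
    (fun h => hx (h ▸ hy₀)) hzy₀
  obtain ⟨A, u, B, hsplit, huc, hA⟩ :=
    List.exists_eq_append_cons_forall_not_left (p := (· ∈ c.support)) ⟨z, p.end_mem_support, hzc⟩
  obtain ⟨A, rfl⟩ : ∃ A', A = x :: A' := by
    rw [← p.cons_tail_support] at hsplit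
    rcases A with _ | ⟨a, A⟩
    · simp only [List.nil_append, List.cons.injEq] at hsplit
      exact absurd (hsplit.1 ▸ huc) hx
    · simp only [List.cons_append, List.cons.injEq] at hsplit
      exact ⟨A, by rw [hsplit.1]⟩
  obtain ⟨w, q, hq, hqc⟩ := hc.exists_isPath_support huc
  have hq_support := q.cons_tail_support
  refine ⟨A, u, q.support.tail, ?_, ?_, fun h => hy₀p (hsplit ▸ h ▸ by simp),
    fun w => hq_support ▸ hqc w⟩
  · have hprefix : (x :: A ++ [u]).IsChain G.Adj :=
      p.isChain_adj_support.prefix ⟨B, by rw [hsplit]; simp⟩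
    have hq_chain : ([u] ++ q.support.tail).IsChain G.Adj := by
      simpa [hq_support] using q.isChain_adj_support
    simpa using hprefix.append_overlap hq_chain (List.cons_ne_nil u [])
  · have hp_nodup : (x :: A).Nodup :=
      (hsplit ▸ hp.support_nodup).sublist (List.sublist_append_left _ _)
    have := hp_nodup.append hq.support_nodup
      (List.disjoint_left.mpr fun a ha haq => hA a ha ((hqc a).mp haq))
    rwa [← hq_support] at this

theorem IsCyclable.insert_of_degree [Fintype V] [DecidableRel G.Adj] {T : Set V} {x : V}
    (hconn : ∀ w, (G.induce {w}ᶜ).Connected) (hT : G.IsCyclable T) (hTne : T.Nonempty)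
    (hdeg : ∀ y ∈ T, Fintype.card V ≤ G.degree x + G.degree y) :
    G.IsCyclable (insert x T) := by
  obtain ⟨v, c, hc, hTc⟩ := hT
  by_cases hxc : x ∈ c.support
  · exact ⟨v, c, hc, fun w hw => hw.elim (· ▸ hxc) (hTc w)⟩
  obtain ⟨y₀, hy₀⟩ := hTne
  obtain ⟨A, u, L, hchain, hnodup, huy₀, hL⟩ :=
    hc.exists_isChain_cons_append_cons (hconn y₀) (hTc y₀ hy₀) hxc
  have hy₀L : y₀ ∈ L := (List.mem_cons.mp ((hL y₀).mpr (hTc y₀ hy₀))).resolve_left huy₀.symm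
  obtain ⟨l₁, y, l₂, rfl, hyT, hl₂⟩ :=
    List.exists_eq_append_cons_forall_not_right (p := (· ∈ T)) ⟨y₀, hy₀L, hy₀⟩
  refine (isCyclable_of_isChain_of_degree (m := A ++ u :: l₁) (by simpa using hchain)
    (by simpa using hnodup) (by simp) (hdeg y hyT)).mono ?_
  rintro t (rfl | ht)
  · simp
  · have htc := (hL t).mpr (hTc t ht)
    have htl₂ : t ∉ l₂ := fun h => hl₂ t h ht
    simp only [List.mem_cons, List.mem_append] at htc
    simp only [Set.mem_ofPred_eq, List.mem_cons, List.mem_append, List.not_mem_nil, or_false]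
    tauto

end SimpleGraph

/-- Theorem A, Shi. -/
theorem shi_cyclable_of_degrees {W : Type*} [Fintype W]
    (G : SimpleGraph W) [DecidableRel G.Adj]
    (h2conn : 3 ≤ Fintype.card W ∧
      ∀ w : W, (G.induce ({w}ᶜ : Set W)).Connected)
    (S : Set W) (hdeg : ∀ x ∈ S, 2 * G.degree x ≥ Fintype.card W) :
    ∃ (v : W) (c : G.Walk v v), c.IsCycle ∧ ∀ s ∈ S, s ∈ c.support := by
  classical
  obtain ⟨hcard, hconn⟩ := h2conn
  suffices h : ∀ T : Finset W, ↑T ⊆ S → G.IsCyclable T by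
    have hS := h S.toFinset (by simp)
    rwa [Set.coe_toFinset] at hS
  intro T
  induction T using Finset.induction_on with
  | empty =>
    obtain ⟨z⟩ : Nonempty W := Fintype.card_pos_iff.mp (by omega)
    exact fun _ => (G.isCyclable_singleton hcard hconn z).mono (by simp)
  | insert x T hxT ih =>
    intro hsub
    rw [Finset.coe_insert] at hsub ⊢
    obtain ⟨hxS, hTS⟩ := Set.insert_subset_iff.mp hsub
    rcases T.eq_empty_or_nonempty with rfl | hTne
    · simpa using G.isCyclable_singleton hcard hconn x
    · exact (ih hTS).insert_of_degree hconn (by simpa using hTne) fun y hy => by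
        have := hdeg x hxS
        have := hdeg y (hTS hy)
        omega
end

section
/- There exists, for every pair of integers m and n with 2 ≤ m ≤ n − 4, a digraph D of order n and a three-element subset Y = {x, y, z} of its vertices such that D is Y-strongly connected, Y satisfies condition A0, and D contains no directed cycle through all three vertices of Y. (Construction: take disjoint digraphs G of order m and H of order n−m with G Hamiltonian, a vertex y of H adjacent in both directions to all other vertices of H, vertices x, z of G with d^+(x,G) = m−1 and d(z,G) = 2(m−1); add all arcs ux and xu for u ∈ V(H) ∖ {y} and the arc yx.) -/
/-!
Basic definitions for finite digraphs (no loops, no multiple arcs), where the arc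
relation is `A : V → V → Prop`.  Paths and cycles are given as lists of (distinct)
vertices.
-/

variable {V : Type*}

/-!
Take `G` to be the complete digraph on `0, …, m-1` with `x = 0`, `z = 1`, and `H` the star on
`m, …, n-1` with centre `y = m`. Once `x` is deleted no arc joins `G - x` to `H`, so a cycle through
`y` and `z` would have to pass through `x` twice. The only nonadjacent pair in `{x, y, z}` is
`{y, z}`, and condition `A₀` for it reduces to
`d(y) + d(z) + d⁻(y) + d⁺(x) = (2(n-m) - 1) + 2(m-1) + (n-m-1) + (n-2) = 4n - m - 6 ≥ 3n - 2`,
which is exactly `m ≤ n - 4`.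
-/

theorem exists_isPathFromTo_of_reflTransGen {A : V → V → Prop} {a b : V}
    (h : Relation.ReflTransGen A a b) : ∃ l, IsPathFromTo A l a b := by
  induction h using Relation.ReflTransGen.head_induction_on with
  | refl => exact ⟨[b], ⟨List.cons_ne_nil _ _, List.nodup_singleton b, .singleton b⟩, rfl, rfl⟩
  | @head a c hac _ ih =>
    obtain ⟨l, ⟨hne, hnd, hch⟩, hhead, hlast⟩ := ih
    by_cases ha : a ∈ l
    · obtain ⟨s, t, rfl⟩ := List.append_of_mem ha
      refine ⟨a :: t, ⟨List.cons_ne_nil _ _, hnd.sublist (List.sublist_append_right _ _),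
        List.IsChain.right_of_append hch⟩, rfl, ?_⟩
      rwa [List.getLast?_append_of_ne_nil _ (List.cons_ne_nil _ _)] at hlast
    · obtain ⟨d, l, rfl⟩ := List.exists_cons_of_ne_nil hne
      cases hhead
      exact ⟨a :: c :: l, ⟨List.cons_ne_nil _ _, List.nodup_cons.2 ⟨ha, hnd⟩,
        List.IsChain.cons_cons hac hch⟩, rfl, by simpa [List.getLast?_cons_cons] using hlast⟩

theorem setStronglyConnected_of_reflTransGen_hub {A : V → V → Prop} {S : Set V} (x : V)
    (hto : ∀ s ∈ S, Relation.ReflTransGen A x s) (hfrom : ∀ s ∈ S, Relation.ReflTransGen A s x) :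
    SetStronglyConnected A S := fun a ha b hb _ =>
  exists_isPathFromTo_of_reflTransGen ((hfrom a ha).trans (hto b hb))

theorem IsCycleOn.cycle_chain {A : V → V → Prop} {l : List V} (hl : IsCycleOn A l) :
    Cycle.Chain A (l : Cycle V) := by
  obtain ⟨hlen, -, hch, hwrap⟩ := hl
  obtain ⟨a, t, rfl⟩ := List.exists_cons_of_ne_nil (List.ne_nil_of_length_pos (l := l) (by omega))
  rw [Cycle.chain_coe_cons, ← List.cons_append]
  exact List.IsChain.append hch (.singleton a) (by simpa using hwrap)

theorem IsCycleOn.iff_of_forall_arc_iff {A : V → V → Prop} {P : V → Prop} {x : V} {l : List V}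
    (hl : IsCycleOn A l) (hx : x ∈ l) (hsep : ∀ a b, A a b → a ≠ x → b ≠ x → (P a ↔ P b))
    {u v : V} (hu : u ∈ l) (hv : v ∈ l) (hux : u ≠ x) (hvx : v ≠ x) : P u ↔ P v := by
  obtain ⟨s, t, rfl⟩ := List.append_of_mem hx
  have hrot : Cycle.Chain A (x :: (t ++ s) : List V) := by
    rw [← List.cons_append, Cycle.coe_eq_coe.mpr List.isRotated_append.symm]
    exact hl.cycle_chain
  have hxts : x ∉ t ++ s := by
    simpa [or_comm] using (List.nodup_cons.mp (List.nodup_middle.mp hl.2.1)).1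
  have hmem : ∀ w ∈ s ++ x :: t, w ≠ x → P w ∈ (t ++ s).map P := fun w hw hwx =>
    List.mem_map_of_mem (by simp only [List.mem_append, List.mem_cons] at hw ⊢; tauto)
  have hchain : ((t ++ s).map P).IsChain (· = ·) :=
    List.isChain_map_of_isChain P (fun a b hab => propext hab)
      ((List.IsChain.left_of_append (List.IsChain.tail hrot)).imp_of_mem_imp
        fun a b ha hb hab => hsep a b hab (ne_of_mem_of_not_mem ha hxts)
          (ne_of_mem_of_not_mem hb hxts))
  have hconst := (List.isChain_iff_pairwise.mp hchain).forall_of_forall (fun _ _ => rfl)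
  exact Iff.of_eq (hconst (hmem u hu hux) (hmem v hv hvx))

theorem condA0_of_arcs [Fintype V] {A : V → V → Prop} {x y z : V}
    (hxz : A x z) (hzx : A z x) (hyx : A y x)
    (hdeg : 3 * Fintype.card V - 2 ≤ deg A y + deg A z + inDeg A y + outDeg A x) :
    CondA0 A {x, y, z} := by
  intro a ha b hb c hc hab hac hbc hnadj
  simp only [Set.mem_insert_iff, Set.mem_singleton_iff] at ha hb hc
  -- a nonadjacent pair avoids `x`, hence is `{y, z}`, and then the third vertex is `x`
  rcases ha with rfl | rfl | rfl <;> rcases hb with rfl | rfl | rfl <;>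
    rcases hc with rfl | rfl | rfl <;> simp_all [DAdj]

theorem ncard_setOf_fin_val {n : ℕ} (Q : ℕ → Prop) [DecidablePred Q] :
    {v : Fin n | Q v}.ncard = ((Finset.range n).filter Q).card := by
  rw [← Set.ncard_image_of_injective _ Fin.val_injective, ← Set.ncard_coe_finset]
  congr 1
  ext j
  simp only [Set.mem_image, Set.mem_ofPred_eq, Finset.coe_filter, Finset.mem_range]
  exact ⟨fun ⟨v, hv, e⟩ => e ▸ ⟨v.2, hv⟩, fun ⟨hj, hq⟩ => ⟨⟨j, hj⟩, hq, rfl⟩⟩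

/-- Vertex `i < m` lies in `G`, vertex `i ≥ m` in `H`; the arcs are those of `G`, the star `H`,
`x ↔ H - y` and `y → x`. -/
def sharpnessArc (m i j : ℕ) : Prop :=
  (i < m ∧ j < m ∧ i ≠ j) ∨ (i = m ∧ m < j) ∨ (m < i ∧ j = m) ∨
    (i = 0 ∧ m < j) ∨ (m < i ∧ j = 0) ∨ (i = m ∧ j = 0)

def sharpnessDigraph (m n : ℕ) (a b : Fin n) : Prop := sharpnessArc m a b

namespace sharpnessDigraph

variable {m n : ℕ}

theorem irrefl (hm : 0 < m) (a : Fin n) : ¬ sharpnessDigraph m n a a := by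
  unfold sharpnessDigraph sharpnessArc; omega

theorem outDeg_zero (hm : 0 < m) (hmn : m < n) :
    outDeg (sharpnessDigraph m n) ⟨0, by omega⟩ = n - 2 := by
  classical
  refine (ncard_setOf_fin_val (sharpnessArc m 0)).trans ?_
  rw [show (Finset.range n).filter (sharpnessArc m 0) = ((Finset.range n).erase 0).erase m by
    ext j; simp [sharpnessArc]; omega]
  rw [Finset.card_erase_of_mem (by simp; omega), Finset.card_erase_of_mem (by simp; omega),
    Finset.card_range]
  omega

theorem outDeg_center (hmn : m < n) : outDeg (sharpnessDigraph m n) ⟨m, hmn⟩ = n - m := by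
  classical
  refine (ncard_setOf_fin_val (sharpnessArc m m)).trans ?_
  rw [show (Finset.range n).filter (sharpnessArc m m) = insert 0 (Finset.Ioo m n) by
    ext j; simp [sharpnessArc]; omega]
  rw [Finset.card_insert_of_notMem (by simp), Nat.card_Ioo]
  omega

theorem inDeg_center (hm : 0 < m) (hmn : m < n) :
    inDeg (sharpnessDigraph m n) ⟨m, hmn⟩ = n - m - 1 := by
  classical
  refine (ncard_setOf_fin_val (sharpnessArc m · m)).trans ?_
  rw [show (Finset.range n).filter (sharpnessArc m · m) = Finset.Ioo m n by
    ext j; simp [sharpnessArc]; omega]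
  rw [Nat.card_Ioo]

theorem outDeg_one (hm : 1 < m) (hmn : m < n) :
    outDeg (sharpnessDigraph m n) ⟨1, by omega⟩ = m - 1 := by
  classical
  refine (ncard_setOf_fin_val (sharpnessArc m 1)).trans ?_
  rw [show (Finset.range n).filter (sharpnessArc m 1) = (Finset.range m).erase 1 by
    ext j; simp [sharpnessArc]; omega]
  rw [Finset.card_erase_of_mem (by simp; omega), Finset.card_range]

theorem inDeg_one (hm : 1 < m) (hmn : m < n) :
    inDeg (sharpnessDigraph m n) ⟨1, by omega⟩ = m - 1 := by
  classical
  refine (ncard_setOf_fin_val (sharpnessArc m · 1)).trans ?_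
  rw [show (Finset.range n).filter (sharpnessArc m · 1) = (Finset.range m).erase 1 by
    ext j; simp [sharpnessArc]; omega]
  rw [Finset.card_erase_of_mem (by simp; omega), Finset.card_range]

theorem degree_bound (hm : 1 < m) (hmn : m + 4 ≤ n) :
    3 * n - 2 ≤
      deg (sharpnessDigraph m n) ⟨m, by omega⟩ + deg (sharpnessDigraph m n) ⟨1, by omega⟩ +
        inDeg (sharpnessDigraph m n) ⟨m, by omega⟩ +
        outDeg (sharpnessDigraph m n) ⟨0, by omega⟩ := by
  rw [deg, deg, outDeg_center, inDeg_center (by omega), outDeg_one hm (by omega),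
    inDeg_one hm (by omega), outDeg_zero (by omega) (by omega)]
  omega

theorem setStronglyConnected (hm : 1 < m) (hmn : m + 1 < n) :
    SetStronglyConnected (sharpnessDigraph m n)
      {⟨0, by omega⟩, ⟨m, by omega⟩, ⟨1, by omega⟩} := by
  have arc (i j : ℕ) (hi : i < n) (hj : j < n) (h : sharpnessArc m i j) :
      Relation.ReflTransGen (sharpnessDigraph m n) ⟨i, hi⟩ ⟨j, hj⟩ :=
    .single h
  apply setStronglyConnected_of_reflTransGen_hub ⟨0, by omega⟩
  all_goals
    simp only [Set.mem_insert_iff, Set.mem_singleton_iff]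
    rintro s (rfl | rfl | rfl)
  · exact .refl
  · exact (arc 0 (m + 1) _ hmn (by unfold sharpnessArc; omega)).trans
      (arc (m + 1) m _ _ (by unfold sharpnessArc; omega))
  · exact arc 0 1 _ _ (by unfold sharpnessArc; omega)
  · exact .refl
  · exact arc m 0 _ _ (by unfold sharpnessArc; omega)
  · exact arc 1 0 _ _ (by unfold sharpnessArc; omega)

theorem not_exists_cycle (hm : 1 < m) (hmn : m < n) :
    ¬ ∃ l, IsCycleOn (sharpnessDigraph m n) l ∧
      ⟨0, by omega⟩ ∈ l ∧ ⟨m, hmn⟩ ∈ l ∧ ⟨1, by omega⟩ ∈ l := by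
  rintro ⟨l, hl, hx, hy, hz⟩
  have hsep (a b : Fin n) (hab : sharpnessDigraph m n a b) (ha : a ≠ ⟨0, by omega⟩)
      (hb : b ≠ ⟨0, by omega⟩) : (a : ℕ) < m ↔ (b : ℕ) < m := by
    simp only [ne_eq, Fin.ext_iff] at ha hb
    unfold sharpnessDigraph sharpnessArc at hab
    omega
  have := hl.iff_of_forall_arc_iff (P := fun v : Fin n => (v : ℕ) < m) hx hsep hz hy
    (by simp [Fin.ext_iff]) (by simp [Fin.ext_iff]; omega)
  simp only [lt_self_iff_false, iff_false, not_lt] at this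
  omega

end sharpnessDigraph

/-- Remark 1: sharpness example. -/
theorem sharpness_example :
    ∀ m n : ℕ, 2 ≤ m → m ≤ n - 4 →
      ∃ (V : Type) (instV : Fintype V) (A : V → V → Prop) (x y z : V),
        @Fintype.card V instV = n ∧ (∀ v, ¬ A v v) ∧
        x ≠ y ∧ x ≠ z ∧ y ≠ z ∧
        SetStronglyConnected A {x, y, z} ∧
        @CondA0 V instV A {x, y, z} ∧
        ¬ ∃ l : List V, IsCycleOn A l ∧ x ∈ l ∧ y ∈ l ∧ z ∈ l := by
  intro m n hm hmn
  have hn : m + 4 ≤ n := by omega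
  refine ⟨Fin n, inferInstance, sharpnessDigraph m n, ⟨0, by omega⟩, ⟨m, by omega⟩, ⟨1, by omega⟩,
    Fintype.card_fin n, sharpnessDigraph.irrefl (by omega), Fin.ne_of_val_ne (by dsimp; omega),
    Fin.ne_of_val_ne (by dsimp; omega), Fin.ne_of_val_ne (by dsimp; omega),
    sharpnessDigraph.setStronglyConnected (by omega) (by omega), condA0_of_arcs ?_ ?_ ?_ ?_,
    sharpnessDigraph.not_exists_cycle (by omega) (by omega)⟩
  · show sharpnessArc m 0 1; unfold sharpnessArc; omega
  · show sharpnessArc m 1 0; unfold sharpnessArc; omega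
  · show sharpnessArc m m 0; unfold sharpnessArc; omega
  · simpa only [Fintype.card_fin] using sharpnessDigraph.degree_bound (by omega) hn
end
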